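/- arXiv:1101.5805 — 8 statements merged into one kernel-verified Lean document; each statement's English description precedes it below -/
import Mathlib

section
/- Let (X,R) be a range space of VC-dimension at most d with d ≥ 2, and let h ≥ 1. Let R_h be the family of all subsets of X obtainable as combinations of unions and intersections of h (not necessarily distinct) members of R. Then the VC-dimension of (X, R_h) is at most 3·d·h·log₂(d·h); that is, every finite subset of X shattered by R_h has cardinality at most 3·d·h·log₂(d·h). -/
/-- A set `A` is shattered by the range family `R` if every subset of `A`
is obtained as the intersection of `A` with some range. -/
def Shatters {X : Type*} (R : Set (Set X)) (A : Set X) : Prop :=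
  ∀ B ⊆ A, ∃ r ∈ R, A ∩ r = B

/-- A formal combination of sets using binary unions and intersections. -/
inductive SetCombo (X : Type u) : Type u
  | leaf : Set X → SetCombo X
  | union : SetCombo X → SetCombo X → SetCombo X
  | inter : SetCombo X → SetCombo X → SetCombo X

namespace SetCombo

/-- The set denoted by a combination. -/
def eval {X : Type u} : SetCombo X → Set X
  | leaf s => s
  | union c₁ c₂ => c₁.eval ∪ c₂.eval
  | inter c₁ c₂ => c₁.eval ∩ c₂.eval

/-- The number of leaves (members of the base family used, with multiplicity). -/
def size {X : Type u} : SetCombo X → ℕ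
  | leaf _ => 1
  | union c₁ c₂ => c₁.size + c₂.size
  | inter c₁ c₂ => c₁.size + c₂.size

/-- All leaves belong to the family `R`. -/
def leavesIn {X : Type u} (R : Set (Set X)) : SetCombo X → Prop
  | leaf s => s ∈ R
  | union c₁ c₂ => c₁.leavesIn R ∧ c₂.leavesIn R
  | inter c₁ c₂ => c₁.leavesIn R ∧ c₂.leavesIn R

end SetCombo

/-- The family of all sets obtainable as combinations of unions and intersections of
`h` (not necessarily distinct) members of `R`. -/
def combos {X : Type u} (R : Set (Set X)) (h : ℕ) : Set (Set X) :=
  {s | ∃ c : SetCombo X, c.size = h ∧ c.leavesIn R ∧ c.eval = s}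


noncomputable section
open Classical

inductive BT : Type
  | lf : BT
  | nd : Bool → BT → BT → BT

namespace BT
def enc : BT → List Bool
  | lf => [false]
  | nd b l r => true :: b :: (enc l ++ enc r)

def nl : BT → ℕ
  | lf => 1
  | nd _ l r => nl l + nl r

lemma length_enc_add_two : ∀ t : BT, (enc t).length + 2 = 3 * nl t
  | lf => by simp [enc, nl]
  | nd b l r => by
      have hl := length_enc_add_two l
      have hr := length_enc_add_two r
      simp only [enc, nl, List.length_cons, List.length_append]
      omega

lemma enc_append_inj : ∀ t₁ t₂ : BT, ∀ s₁ s₂ : List Bool,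
    enc t₁ ++ s₁ = enc t₂ ++ s₂ → t₁ = t₂ ∧ s₁ = s₂
  | lf, lf, s₁, s₂ => by simp [enc]
  | lf, nd b l r, s₁, s₂ => by simp [enc]
  | nd b l r, lf, s₁, s₂ => by simp [enc]
  | nd b₁ l₁ r₁, nd b₂ l₂ r₂, s₁, s₂ => by
      intro hyp
      simp only [enc, List.cons_append, List.cons.injEq, List.append_assoc] at hyp
      obtain ⟨hb, h⟩ := hyp.2
      obtain ⟨hl, h'⟩ := enc_append_inj l₁ l₂ _ _ h
      obtain ⟨hr, h''⟩ := enc_append_inj r₁ r₂ _ _ h'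
      exact ⟨by rw [hb, hl, hr], h''⟩
end BT


namespace VCAux
variable {X : Type*}

def tr (A : Finset X) (s : Set X) : Finset X := A.filter (· ∈ s)

lemma size_pos : ∀ c : SetCombo X, 1 ≤ c.size
  | SetCombo.leaf _ => le_refl 1
  | SetCombo.union l r => by
      have := size_pos l; have := size_pos r
      simp only [SetCombo.size]; omega
  | SetCombo.inter l r => by
      have := size_pos l; have := size_pos r
      simp only [SetCombo.size]; omega

lemma coe_tr (A : Finset X) (s : Set X) : ((tr A s : Finset X) : Set X) = ↑A ∩ s := by
  simp [tr, Finset.coe_filter]; rfl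

def shapeOf : SetCombo X → BT
  | SetCombo.leaf _ => BT.lf
  | SetCombo.union l r => BT.nd true (shapeOf l) (shapeOf r)
  | SetCombo.inter l r => BT.nd false (shapeOf l) (shapeOf r)

def leavesOf : SetCombo X → List (Set X)
  | SetCombo.leaf s => [s]
  | SetCombo.union l r => leavesOf l ++ leavesOf r
  | SetCombo.inter l r => leavesOf l ++ leavesOf r

lemma nl_shapeOf : ∀ c : SetCombo X, (shapeOf c).nl = c.size
  | SetCombo.leaf _ => rfl
  | SetCombo.union l r => by
      simp [shapeOf, BT.nl, SetCombo.size, nl_shapeOf l, nl_shapeOf r]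
  | SetCombo.inter l r => by
      simp [shapeOf, BT.nl, SetCombo.size, nl_shapeOf l, nl_shapeOf r]

lemma length_leavesOf : ∀ c : SetCombo X, (leavesOf c).length = c.size
  | SetCombo.leaf _ => rfl
  | SetCombo.union l r => by
      simp [leavesOf, SetCombo.size, length_leavesOf l, length_leavesOf r]
  | SetCombo.inter l r => by
      simp [leavesOf, SetCombo.size, length_leavesOf l, length_leavesOf r]

lemma mem_leavesOf {R : Set (Set X)} : ∀ c : SetCombo X, c.leavesIn R →
    ∀ s ∈ leavesOf c, s ∈ R
  | SetCombo.leaf t => by simp [leavesOf, SetCombo.leavesIn]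
  | SetCombo.union l r => fun hc s hs => by
      rcases List.mem_append.1 hs with h | h
      · exact mem_leavesOf l hc.1 s h
      · exact mem_leavesOf r hc.2 s h
  | SetCombo.inter l r => fun hc s hs => by
      rcases List.mem_append.1 hs with h | h
      · exact mem_leavesOf l hc.1 s h
      · exact mem_leavesOf r hc.2 s h

/-- rebuild a finset from a shape and a list of leaf finsets, returning leftover list -/
def rebuild [DecidableEq X] : BT → List (Finset X) → Finset X × List (Finset X)
  | BT.lf, [] => (∅, [])
  | BT.lf, s :: rest => (s, rest)
  | BT.nd b l r, L =>
      let p := rebuild l L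
      let q := rebuild r p.2
      (if b then p.1 ∪ q.1 else p.1 ∩ q.1, q.2)

lemma rebuild_spec [DecidableEq X] (A : Finset X) :
    ∀ (c : SetCombo X) (tail : List (Finset X)),
      rebuild (shapeOf c) ((leavesOf c).map (tr A) ++ tail) = (tr A c.eval, tail)
  | SetCombo.leaf s, tail => by simp [shapeOf, leavesOf, rebuild, SetCombo.eval]
  | SetCombo.union l r, tail => by
      have hl := rebuild_spec A l ((leavesOf r).map (tr A) ++ tail)
      have hr := rebuild_spec A r tail
      simp only [shapeOf, leavesOf, SetCombo.eval, List.map_append, List.append_assoc, rebuild,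
        hl, hr]
      simp only [if_true]
      congr 1
      ext x
      simp [tr, Finset.mem_filter, Finset.mem_union]
      tauto
  | SetCombo.inter l r, tail => by
      have hl := rebuild_spec A l ((leavesOf r).map (tr A) ++ tail)
      have hr := rebuild_spec A r tail
      simp only [shapeOf, leavesOf, SetCombo.eval, List.map_append, List.append_assoc, rebuild,
        hl, hr]
      simp only [if_false, Bool.false_eq_true]
      congr 1
      ext x
      simp [tr, Finset.mem_filter, Finset.mem_inter]
      tauto



open Classical
variable {X : Type*}

open Finset in
set_option synthInstance.maxHeartbeats 1000000 in
lemma count_lemma (R : Set (Set X)) (h : ℕ) (hh : 1 ≤ h) (A : Finset X)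
    (hS : ∀ B ⊆ (A : Set X), ∃ r ∈ {s | ∃ c : SetCombo X, c.size = h ∧ c.leavesIn R ∧ c.eval = s},
      (A : Set X) ∩ r = B) :
    2 ^ A.card ≤ 2 ^ (3 * h - 2) *
      ((A.powerset.filter (fun s : Finset X => ∃ r ∈ R, (s : Set X) = (A : Set X) ∩ r)).card) ^ h := by
  set T : Finset (Finset X) :=
    A.powerset.filter (fun s : Finset X => ∃ r ∈ R, (s : Set X) = (A : Set X) ∩ r) with hT
  have key : ∀ B : Finset X, B ∈ A.powerset →
      ∃ c : SetCombo X, c.size = h ∧ c.leavesIn R ∧ (A : Set X) ∩ c.eval = (B : Set X) := by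
    intro B hB
    obtain ⟨r, hr, hAr⟩ := hS (B : Set X)
      (by simpa [Finset.coe_subset] using Finset.mem_powerset.1 hB)
    obtain ⟨c, hc1, hc2, hc3⟩ := hr
    exact ⟨c, hc1, hc2, by rw [hc3, hAr]⟩
  choose c hc1 hc2 hc3 using key
  have hlenmap : ∀ B (hB : B ∈ A.powerset), ((leavesOf (c B hB)).map (tr A)).length = h := by
    intro B hB; simp [length_leavesOf, hc1]
  have hlenenc : ∀ B (hB : B ∈ A.powerset), (BT.enc (shapeOf (c B hB))).length = 3 * h - 2 := by
    intro B hB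
    have := BT.length_enc_add_two (shapeOf (c B hB))
    rw [nl_shapeOf, hc1] at this
    omega
  have hmemT : ∀ B (hB : B ∈ A.powerset) (i : ℕ) (hi : i < ((leavesOf (c B hB)).map (tr A)).length),
      ((leavesOf (c B hB)).map (tr A))[i] ∈ T := by
    intro B hB i hi
    have hmem := List.getElem_mem hi
    obtain ⟨s, hs, hmap⟩ := List.mem_map.1 hmem
    have hsR : s ∈ R := mem_leavesOf _ (hc2 B hB) s hs
    rw [← hmap, hT, Finset.mem_filter, Finset.mem_powerset]
    exact ⟨Finset.filter_subset _ _, s, hsR, coe_tr A s⟩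
  let F : {B // B ∈ A.powerset} → (Fin (3 * h - 2) → Bool) × (Fin h → {s // s ∈ T}) :=
    fun B =>
      ⟨fun i => (BT.enc (shapeOf (c B.1 B.2))).getD i false,
       fun i => ⟨((leavesOf (c B.1 B.2)).map (tr A))[(i : ℕ)]'(by rw [hlenmap]; exact i.2),
         hmemT B.1 B.2 i _⟩⟩
  have hinj : Function.Injective F := by
    rintro ⟨B₁, h₁⟩ ⟨B₂, h₂⟩ hFB
    obtain ⟨hfst, hsnd⟩ := Prod.ext_iff.1 hFB
    have hshape : shapeOf (c B₁ h₁) = shapeOf (c B₂ h₂) := by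
      have hle : BT.enc (shapeOf (c B₁ h₁)) = BT.enc (shapeOf (c B₂ h₂)) := by
        apply List.ext_getElem (by rw [hlenenc, hlenenc])
        intro i hi1 hi2
        have hi : i < 3 * h - 2 := by rw [hlenenc] at hi1; exact hi1
        have hval : (BT.enc (shapeOf (c B₁ h₁))).getD i false
            = (BT.enc (shapeOf (c B₂ h₂))).getD i false := congrFun hfst ⟨i, hi⟩
        rwa [List.getD_eq_getElem _ _ hi1, List.getD_eq_getElem _ _ hi2] at hval
      have hle2 : BT.enc (shapeOf (c B₁ h₁)) ++ [] = BT.enc (shapeOf (c B₂ h₂)) ++ [] := by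
        rw [List.append_nil, List.append_nil, hle]
      exact (BT.enc_append_inj _ _ [] [] hle2).1
    have hleaves : (leavesOf (c B₁ h₁)).map (tr A) = (leavesOf (c B₂ h₂)).map (tr A) := by
      apply List.ext_getElem (by rw [hlenmap, hlenmap])
      intro i hi1 hi2
      have hi : i < h := by rw [hlenmap] at hi1; exact hi1
      have hval : (⟨((leavesOf (c B₁ h₁)).map (tr A))[(i : ℕ)]'(by rw [hlenmap]; exact hi),
            hmemT B₁ h₁ i _⟩ : {s // s ∈ T})
          = ⟨((leavesOf (c B₂ h₂)).map (tr A))[(i : ℕ)]'(by rw [hlenmap]; exact hi),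
            hmemT B₂ h₂ i _⟩ := congrFun hsnd ⟨i, hi⟩
      have := congrArg Subtype.val hval
      simpa using this
    have hreb := rebuild_spec A (c B₁ h₁) ([] : List (Finset X))
    rw [hshape, hleaves, rebuild_spec A (c B₂ h₂) ([] : List (Finset X))] at hreb
    have htr : tr A (c B₁ h₁).eval = tr A (c B₂ h₂).eval := by
      have := congrArg Prod.fst hreb
      simpa using this.symm
    have hcoe : (B₁ : Set X) = (B₂ : Set X) := by
      have e1 := coe_tr A (c B₁ h₁).eval
      have e2 := coe_tr A (c B₂ h₂).eval
      rw [hc3 B₁ h₁] at e1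
      rw [hc3 B₂ h₂] at e2
      rw [← e1, ← e2, htr]
    simp [Finset.coe_injective hcoe]
  have hcard := Fintype.card_le_of_injective F hinj
  calc 2 ^ A.card = Fintype.card {B // B ∈ A.powerset} := by
        simp [Fintype.card_coe, Finset.card_powerset]
    _ ≤ Fintype.card ((Fin (3 * h - 2) → Bool) × (Fin h → {s // s ∈ T})) := hcard
    _ = 2 ^ (3 * h - 2) * T.card ^ h := by
        simp [Fintype.card_prod, Fintype.card_fun, Fintype.card_coe]

open Finset in
set_option synthInstance.maxHeartbeats 1000000 in
lemma trace_card_le (R : Set (Set X)) (d : ℕ) (A : Finset X)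
    (hdim : ∀ B : Finset X, Shatters R (B : Set X) → B.card ≤ d) :
    ((A.powerset.filter (fun s : Finset X => ∃ r ∈ R, (s : Set X) = (A : Set X) ∩ r)).card)
      ≤ ∑ i ∈ Finset.range (d + 1), (A.card).choose i := by
  classical
  set T : Finset (Finset X) :=
    A.powerset.filter (fun s : Finset X => ∃ r ∈ R, (s : Set X) = (A : Set X) ∩ r) with hT
  have hsub : T.shatterer ⊆ (Finset.range (d + 1)).biUnion (fun i => Finset.powersetCard i A) := by
    intro s hs
    have hshat : T.Shatters s := Finset.mem_shatterer.1 hs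
    have hsA : s ⊆ A := by
      obtain ⟨u, huT, hsu⟩ := hshat (Finset.Subset.refl s)
      have hsu' : s ⊆ u := by
        intro x hx
        have hx' : x ∈ s ∩ u := by rw [hsu]; exact hx
        exact (Finset.mem_inter.1 hx').2
      exact hsu'.trans (Finset.mem_powerset.1 (Finset.mem_filter.1 huT).1)
    have hRs : Shatters R (s : Set X) := by
      intro B hB
      have hbs : ((s.filter (· ∈ B) : Finset X) : Set X) = B := by
        rw [Finset.coe_filter]
        ext x
        simp only [Set.mem_setOf_eq, Finset.mem_coe]
        exact ⟨fun hx => hx.2, fun hx => ⟨hB hx, hx⟩⟩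
      obtain ⟨u, huT, hsu⟩ := hshat (Finset.filter_subset (· ∈ B) s)
      obtain ⟨r, hrR, hur⟩ := (Finset.mem_filter.1 huT).2
      refine ⟨r, hrR, ?_⟩
      have hAs : (s : Set X) ∩ (A : Set X) = (s : Set X) :=
        Set.inter_eq_left.2 (by exact_mod_cast hsA)
      calc (s : Set X) ∩ r = ((s : Set X) ∩ (A : Set X)) ∩ r := by rw [hAs]
        _ = (s : Set X) ∩ ((A : Set X) ∩ r) := Set.inter_assoc _ _ _
        _ = (s : Set X) ∩ (u : Set X) := by rw [hur]
        _ = ((s ∩ u : Finset X) : Set X) := (Finset.coe_inter _ _).symm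
        _ = B := by rw [hsu, hbs]
    have hcard : s.card ≤ d := hdim s hRs
    exact Finset.mem_biUnion.2 ⟨s.card, Finset.mem_range.2 (Nat.lt_succ_of_le hcard),
      Finset.mem_powersetCard.2 ⟨hsA, rfl⟩⟩
  calc T.card ≤ T.shatterer.card := Finset.card_le_card_shatterer T
    _ ≤ ((Finset.range (d + 1)).biUnion (fun i => Finset.powersetCard i A)).card :=
        Finset.card_le_card hsub
    _ ≤ ∑ i ∈ Finset.range (d + 1), (Finset.powersetCard i A).card := Finset.card_biUnion_le
    _ = ∑ i ∈ Finset.range (d + 1), (A.card).choose i := by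
        simp [Finset.card_powersetCard]

lemma sum_choose_le_pow (d : ℕ) (hd : 2 ≤ d) (n : ℕ) (hn : 2 ≤ n) :
    ∑ i ∈ Finset.range (d + 1), n.choose i ≤ n ^ d := by
  induction d, hd using Nat.le_induction with
  | base =>
      have h2 : n.choose 2 * 2 = n.choose 1 * (n - 1) := Nat.choose_succ_right_eq n 1
      obtain ⟨m, rfl⟩ : ∃ m, n = m + 1 := ⟨n - 1, by omega⟩
      have hm : 1 ≤ m := by omega
      simp only [Nat.choose_one_right, Nat.add_sub_cancel] at h2
      have hsq : (m + 1) ^ 2 = m * m + 2 * m + 1 := by ring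
      have hmm : m ≤ m * m := Nat.le_mul_of_pos_left m hm
      have h2' : (m+1).choose 2 * 2 = m * m + m := by rw [h2]; ring
      simp only [Finset.sum_range_succ, Finset.range_one, Finset.sum_singleton,
        Nat.choose_zero_right, Nat.choose_one_right]
      omega
  | succ d hd ih =>
      rw [Finset.sum_range_succ]
      have h1 : n.choose (d + 1) * (d + 1) = n.choose d * (n - d) := Nat.choose_succ_right_eq n d
      have h2 : 3 * n.choose (d + 1) ≤ n ^ (d + 1) := by
        calc 3 * n.choose (d + 1) ≤ (d + 1) * n.choose (d + 1) :=
              Nat.mul_le_mul_right _ (by omega)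
          _ = n.choose d * (n - d) := by rw [mul_comm]; exact h1
          _ ≤ n ^ d * n := Nat.mul_le_mul (Nat.choose_le_pow _ _) (Nat.sub_le n d)
          _ = n ^ (d + 1) := by ring
      have h3 : 2 * n ^ d ≤ n ^ (d + 1) := by
        calc 2 * n ^ d ≤ n * n ^ d := Nat.mul_le_mul_right _ hn
          _ = n ^ (d + 1) := by ring
      omega


-- small numeric facts
lemma logb2_three_le : Real.logb 2 3 ≤ 8/5 := by
  rw [Real.logb, div_le_iff₀ (Real.log_pos one_lt_two)]
  have h1 : (5:ℝ) * Real.log 3 = Real.log (3^5) := by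
    rw [Real.log_pow]; push_cast; ring
  have h2 : (8:ℝ) * Real.log 2 = Real.log (2^8) := by
    rw [Real.log_pow]; push_cast; ring
  nlinarith [Real.log_le_log (by norm_num : (0:ℝ) < 3^5)
    (by norm_num : ((3:ℝ)^5) ≤ 2^8), h1, h2, Real.log_pos one_lt_two]

lemma logb2_ge_of_pow_le {k : ℝ} {a b : ℕ} (hk : 0 < k) (hab : (2:ℝ)^a ≤ k^b) (hb : 0 < b) :
    (a : ℝ) / b ≤ Real.logb 2 k := by
  rw [Real.logb, le_div_iff₀ (Real.log_pos one_lt_two), div_mul_eq_mul_div, div_le_iff₀ (by positivity)]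
  have h1 : (a:ℝ) * Real.log 2 = Real.log (2^a) := by rw [Real.log_pow]
  have h2 : Real.log k * b = Real.log (k^b) := by rw [Real.log_pow]; ring
  rw [h1, h2]
  exact Real.log_le_log (by positivity) hab

set_option maxHeartbeats 1000000 in
lemma analytic_contra (d h n : ℕ) (hd : 2 ≤ d) (hh : 2 ≤ h)
    (hgt : 3 * ((d:ℝ) * h) * Real.logb 2 ((d:ℝ) * h) < n)
    (hle : (n:ℝ) ≤ (3 * (h:ℝ) - 2) + ((d:ℝ) * h) * Real.logb 2 n) : False := by
  set k : ℝ := (d:ℝ) * h with hk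
  set L : ℝ := Real.logb 2 k with hLdef
  set n0 : ℝ := 3 * k * L with hn0def
  clear_value n0 L k
  have hk4 : (4:ℝ) ≤ k := by
    have : (4:ℕ) ≤ d * h := le_trans (by norm_num) (Nat.mul_le_mul hd hh)
    rw [hk]; exact_mod_cast this
  have hkpos : (0:ℝ) < k := by linarith
  have hL2 : (2:ℝ) ≤ L := by
    have h1 : Real.logb 2 (4:ℝ) ≤ L := by
      rw [hLdef]; exact Real.logb_le_logb_of_le one_lt_two (by norm_num) hk4
    have h2 : Real.logb 2 (4:ℝ) = 2 := by
      rw [show (4:ℝ) = 2^(2:ℕ) by norm_num, Real.logb_pow, Real.logb_self_eq_one one_lt_two]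
      norm_num
    linarith
  have hn0pos : (0:ℝ) < n0 := by rw [hn0def]; positivity
  have hn0_24 : (24:ℝ) ≤ n0 := by
    rw [hn0def]
    have h1 : (4:ℝ) * 2 ≤ k * L := mul_le_mul hk4 hL2 (by norm_num) (by linarith)
    linarith
  have hgt' : n0 < (n:ℝ) := hgt
  have hnpos : (0:ℝ) < n := lt_trans hn0pos hgt'
  have hlog2pos : (0:ℝ) < Real.log 2 := Real.log_pos one_lt_two
  have hlog2 : (0.6931:ℝ) ≤ Real.log 2 := by
    have := Real.log_two_gt_d9; linarith
  -- Step A : concavity bound on logb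
  have hA : Real.logb 2 n ≤ Real.logb 2 n0 + ((n:ℝ) - n0) / (n0 * Real.log 2) := by
    have hdiv : (0:ℝ) < (n:ℝ) / n0 := by positivity
    have h1 : Real.log ((n:ℝ) / n0) ≤ (n:ℝ) / n0 - 1 := Real.log_le_sub_one_of_pos hdiv
    rw [Real.log_div (ne_of_gt hnpos) (ne_of_gt hn0pos)] at h1
    have h2 : (n:ℝ) / n0 - 1 = ((n:ℝ) - n0) / n0 := by field_simp
    rw [h2] at h1
    have h3 : Real.log n ≤ Real.log n0 + ((n:ℝ) - n0) / n0 := by linarith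
    rw [Real.logb, Real.logb]
    calc Real.log n / Real.log 2 ≤ (Real.log n0 + ((n:ℝ) - n0) / n0) / Real.log 2 := by
          gcongr
      _ = Real.log n0 / Real.log 2 + ((n:ℝ) - n0) / (n0 * Real.log 2) := by
          rw [add_div, div_div]
  -- Step B : slope bound
  have hB : k * Real.logb 2 n ≤ k * Real.logb 2 n0 + ((n:ℝ) - n0) / 4 := by
    have hslope : k / (n0 * Real.log 2) ≤ 1 / 4 := by
      rw [div_le_div_iff₀ (by positivity) (by norm_num)]
      rw [hn0def]
      have h1 : (2:ℝ) * 0.6931 ≤ L * Real.log 2 := mul_le_mul hL2 hlog2 (by norm_num) (by linarith)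
      have h2 : (3*k) * ((2:ℝ) * 0.6931) ≤ (3*k) * (L * Real.log 2) :=
        mul_le_mul_of_nonneg_left h1 (by linarith)
      nlinarith
    have hnn : (0:ℝ) ≤ (n:ℝ) - n0 := le_of_lt (by linarith)
    have h4 : k * (((n:ℝ) - n0) / (n0 * Real.log 2)) ≤ ((n:ℝ) - n0) / 4 := by
      have : k * (((n:ℝ) - n0) / (n0 * Real.log 2)) = ((n:ℝ) - n0) * (k / (n0 * Real.log 2)) := by
        ring
      rw [this]
      calc ((n:ℝ) - n0) * (k / (n0 * Real.log 2)) ≤ ((n:ℝ) - n0) * (1/4) := by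
            exact mul_le_mul_of_nonneg_left hslope hnn
        _ = ((n:ℝ) - n0) / 4 := by ring
    nlinarith [mul_le_mul_of_nonneg_left hA (le_of_lt hkpos)]
  -- Step D : main estimate at n0
  have hD : k * Real.logb 2 n0 ≤ n0 - (3 * (h:ℝ) - 2) := by
    have hLpos : (0:ℝ) < L := by linarith
    have hsplit : Real.logb 2 n0 = Real.logb 2 3 + L + Real.logb 2 L := by
      rw [hn0def]
      rw [show 3 * k * L = 3 * (k * L) by ring]
      rw [Real.logb_mul (by norm_num) (by positivity),
          Real.logb_mul (by positivity) (by positivity)]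
      rw [← hLdef, add_assoc]
    have h3h : 3 * (h:ℝ) - 2 ≤ (3/2) * k := by
      rw [hk]
      have : (h:ℝ) * 2 ≤ (d:ℝ) * h := by
        have : (2:ℝ) ≤ (d:ℝ) := by exact_mod_cast hd
        nlinarith [show (0:ℝ) < (h:ℝ) by exact_mod_cast Nat.lt_of_lt_of_le Nat.zero_lt_two hh]
      nlinarith
    by_cases hcase : d * h = 4
    · -- k = 4, h = 2, d = 2
      have hh2 : h = 2 := by
        have h2h : 2 * h ≤ 4 := by rw [← hcase]; exact Nat.mul_le_mul_right h hd
        have hd2 : 2 * d ≤ 4 := by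
          rw [← hcase]; calc 2 * d ≤ h * d := Nat.mul_le_mul_right d hh
            _ = d * h := Nat.mul_comm h d
        omega
      have hd2 : d = 2 := by rw [hh2] at hcase; omega
      have hkval : k = 4 := by rw [hk, hh2, hd2]; norm_num
      have hLval : L = 2 := by
        rw [hLdef, hkval, show (4:ℝ) = 2^(2:ℕ) by norm_num, Real.logb_pow,
          Real.logb_self_eq_one one_lt_two]
        norm_num
      have hn0val : n0 = 24 := by rw [hn0def, hkval, hLval]; norm_num
      have hlogb24 : Real.logb 2 n0 ≤ 5 := by
        rw [hn0val]
        have h32 : Real.logb 2 (32:ℝ) = 5 := by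
          rw [show (32:ℝ) = 2^(5:ℕ) by norm_num, Real.logb_pow,
            Real.logb_self_eq_one one_lt_two]
          norm_num
        have := Real.logb_le_logb_of_le one_lt_two (by norm_num : (0:ℝ) < 24)
          (by norm_num : (24:ℝ) ≤ 32)
        linarith
      have hcast : (h:ℝ) = 2 := by rw [hh2]; norm_num
      have hkl : k * Real.logb 2 n0 = 4 * Real.logb 2 n0 := by rw [hkval]
      rw [hkl, hcast, hn0val]
      rw [hn0val] at hlogb24
      linarith
    · -- k ≥ 5
      have hk5 : (5:ℝ) ≤ k := by
        have : 5 ≤ d * h := by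
          have : 4 ≤ d * h := le_trans (by norm_num) (Nat.mul_le_mul hd hh)
          omega
        rw [hk]; exact_mod_cast this
      have hL94 : (9/4 : ℝ) ≤ L := by
        have h5 : (9:ℝ)/4 ≤ Real.logb 2 (5:ℝ) := by
          have := logb2_ge_of_pow_le (k := (5:ℝ)) (a := 9) (b := 4) (by norm_num)
            (by norm_num) (by norm_num)
          simpa using this
        have := Real.logb_le_logb_of_le one_lt_two (by norm_num : (0:ℝ) < 5) hk5
        rw [← hLdef] at this
        linarith
      have hlogL : Real.logb 2 L ≤ 1 + (L/2 - 1) * (13/9) := by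
        have h1 : Real.log (L/2) ≤ L/2 - 1 := Real.log_le_sub_one_of_pos (by linarith)
        have h2 : Real.log L = Real.log (L/2) + Real.log 2 := by
          rw [← Real.log_mul (by linarith) (by norm_num)]
          congr 1; field_simp
        have h9 : (9:ℝ)/13 ≤ Real.log 2 := by linarith
        rw [Real.logb]
        rw [h2, add_div]
        have h4 : Real.log 2 / Real.log 2 = 1 := div_self (ne_of_gt hlog2pos)
        rw [h4]
        have h5 : Real.log (L/2) / Real.log 2 ≤ (L/2 - 1) * (13/9) := by
          rw [div_le_iff₀ hlog2pos]
          have hcases : (0:ℝ) ≤ L/2 - 1 := by linarith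
          nlinarith
        linarith
      rw [hsplit]
      have hlogb3 : Real.logb 2 3 ≤ 8/5 := logb2_three_le
      have hmain : Real.logb 2 3 + L + Real.logb 2 L ≤ 3 * L - 3/2 := by
        have h115 : (239/115 : ℝ) ≤ L := by linarith
        linarith
      rw [hn0def]
      have hprod : k * (Real.logb 2 3 + L + Real.logb 2 L) ≤ k * (3 * L - 3/2) :=
        mul_le_mul_of_nonneg_left hmain hkpos.le
      nlinarith
  -- conclude
  have hfinal : (n:ℝ) ≤ n0 + ((n:ℝ) - n0) / 4 := by
    calc (n:ℝ) ≤ (3 * (h:ℝ) - 2) + k * Real.logb 2 n := hle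
      _ ≤ (3 * (h:ℝ) - 2) + (k * Real.logb 2 n0 + ((n:ℝ) - n0) / 4) := by linarith
      _ ≤ (3 * (h:ℝ) - 2) + ((n0 - (3 * (h:ℝ) - 2)) + ((n:ℝ) - n0) / 4) := by linarith
      _ = n0 + ((n:ℝ) - n0) / 4 := by ring
  linarith

end VCAux
end

/-- If `(X, R)` has VC-dimension at most `d ≥ 2` and `h ≥ 1`, then the range space of
all combinations of unions and intersections of `h` members of `R` has VC-dimension
at most `3 d h log₂(d h)`. -/
theorem vcdim_combos {X : Type*} (R : Set (Set X)) (d h : ℕ) (hd : 2 ≤ d) (hh : 1 ≤ h)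
    (hdim : ∀ A : Finset X, Shatters R (A : Set X) → A.card ≤ d) :
    ∀ A : Finset X, Shatters (combos R h) (A : Set X) →
      (A.card : ℝ) ≤ 3 * d * h * Real.logb 2 (d * h) := by
  classical
  intro A hA
  rcases eq_or_lt_of_le hh with hh1 | hh2
  · -- h = 1 : combos R 1 = R
    have hAR : Shatters R (A : Set X) := by
      intro B hB
      obtain ⟨r, hr, hAr⟩ := hA B hB
      obtain ⟨c, hc1, hc2, hc3⟩ := hr
      obtain ⟨s, rfl⟩ : ∃ s, c = SetCombo.leaf s := by
        cases c with
        | leaf s => exact ⟨s, rfl⟩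
        | union c₁ c₂ =>
            exfalso
            have h1 := VCAux.size_pos c₁
            have h2 := VCAux.size_pos c₂
            simp only [SetCombo.size] at hc1
            omega
        | inter c₁ c₂ =>
            exfalso
            have h1 := VCAux.size_pos c₁
            have h2 := VCAux.size_pos c₂
            simp only [SetCombo.size] at hc1
            omega
      refine ⟨r, ?_, hAr⟩
      rw [← hc3]
      exact hc2
    have hcard := hdim A hAR
    have hlogb : (1:ℝ) ≤ Real.logb 2 ((d:ℝ) * h) := by
      have hdh : (2:ℝ) ≤ (d:ℝ) * h := by
        have : 2 ≤ d * h := le_trans hd (Nat.le_mul_of_pos_right d (by omega))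
        exact_mod_cast this
      have := Real.logb_le_logb_of_le one_lt_two (by norm_num : (0:ℝ) < 2) hdh
      rwa [Real.logb_self_eq_one one_lt_two] at this
    have hd' : (2:ℝ) ≤ (d:ℝ) := by exact_mod_cast hd
    have hh' : (1:ℝ) ≤ (h:ℝ) := by exact_mod_cast hh
    have hcard' : (A.card : ℝ) ≤ (d:ℝ) := by exact_mod_cast hcard
    have hstep : 3 * (d:ℝ) * h * 1 ≤ 3 * (d:ℝ) * h * Real.logb 2 ((d:ℝ) * h) := by
      apply mul_le_mul_of_nonneg_left hlogb
      positivity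
    nlinarith
  · -- h ≥ 2
    by_contra hcon
    push_neg at hcon
    set n := A.card with hn
    have hdh4 : (4:ℕ) ≤ d * h := le_trans (by norm_num) (Nat.mul_le_mul hd hh2)
    have hdh4' : (4:ℝ) ≤ (d:ℝ) * h := by exact_mod_cast hdh4
    have hL2 : (2:ℝ) ≤ Real.logb 2 ((d:ℝ) * h) := by
      have h1 : Real.logb 2 (4:ℝ) ≤ Real.logb 2 ((d:ℝ) * h) :=
        Real.logb_le_logb_of_le one_lt_two (by norm_num) hdh4'
      have h2 : Real.logb 2 (4:ℝ) = 2 := by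
        rw [show (4:ℝ) = 2^(2:ℕ) by norm_num, Real.logb_pow, Real.logb_self_eq_one one_lt_two]
        norm_num
      linarith
    have hn24 : (24:ℝ) < (n:ℝ) := by
      have : (24:ℝ) ≤ 3 * (d:ℝ) * h * Real.logb 2 ((d:ℝ) * h) := by
        nlinarith
      linarith
    have hn2 : 2 ≤ n := by
      by_contra hcontra
      push_neg at hcontra
      interval_cases n <;> norm_num at hn24
    -- counting
    have hcount := VCAux.count_lemma R h hh A hA
    have htrace := VCAux.trace_card_le R d A hdim
    have hphi := VCAux.sum_choose_le_pow d hd n hn2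
    have hm : ((A.powerset.filter
        (fun s : Finset X => ∃ r ∈ R, (s : Set X) = (A : Set X) ∩ r)).card) ≤ n ^ d :=
      le_trans htrace hphi
    have hnat : 2 ^ n ≤ 2 ^ (3 * h - 2) * n ^ (d * h) := by
      calc 2 ^ n ≤ 2 ^ (3 * h - 2) * ((A.powerset.filter
            (fun s : Finset X => ∃ r ∈ R, (s : Set X) = (A : Set X) ∩ r)).card) ^ h := hcount
        _ ≤ 2 ^ (3 * h - 2) * (n ^ d) ^ h :=
            Nat.mul_le_mul_left _ (Nat.pow_le_pow_left hm h)
        _ = 2 ^ (3 * h - 2) * n ^ (d * h) := by rw [← pow_mul]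
    have hreal : ((2:ℝ)) ^ n ≤ (2:ℝ) ^ (3 * h - 2) * (n:ℝ) ^ (d * h) := by
      exact_mod_cast hnat
    have hnpos : (0:ℝ) < (n:ℝ) := by linarith
    have hlogle : (n:ℝ) ≤ (3 * (h:ℝ) - 2) + ((d:ℝ) * h) * Real.logb 2 n := by
      have h1 := Real.logb_le_logb_of_le one_lt_two (by positivity) hreal
      rw [Real.logb_pow] at h1
      rw [Real.logb_mul (by positivity) (by positivity), Real.logb_pow, Real.logb_pow,
        Real.logb_self_eq_one one_lt_two] at h1
      have hc1 : ((3 * h - 2 : ℕ) : ℝ) = 3 * (h:ℝ) - 2 := by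
        have h32 : 2 ≤ 3 * h := by omega
        push_cast [Nat.cast_sub h32]
        ring
      have hc2 : ((d * h : ℕ) : ℝ) = (d:ℝ) * h := by push_cast; ring
      rw [hc1, hc2] at h1
      linarith
    exact VCAux.analytic_contra d h n hd hh2
      (by nlinarith [hcon]) hlogle
end

section
/- Let d, h, n be natural numbers with d ≥ 2, h ≥ 1, and n ≥ 3·d·h·log₂(d·h) (as real numbers). Then h^{2h} · n^{d·h} < 2^n. -/
/-- For `d ≥ 2`, `h ≥ 1` and `n ≥ 3·d·h·log₂(d·h)` (as reals), one has
`h^(2h) · n^(dh) < 2^n`. -/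
theorem combo_counting_ineq (d h n : ℕ) (hd : 2 ≤ d) (hh : 1 ≤ h)
    (hn : (3 : ℝ) * d * h * Real.logb 2 (d * h) ≤ n) :
    (h : ℝ) ^ (2 * h) * (n : ℝ) ^ (d * h) < 2 ^ n := by
  have l2 : (0:ℝ) < Real.log 2 := Real.log_pos (by norm_num)
  have hdR : (2:ℝ) ≤ (d:ℝ) := by exact_mod_cast hd
  have hhR : (1:ℝ) ≤ (h:ℝ) := by exact_mod_cast hh
  set M : ℝ := (d:ℝ) * (h:ℝ) with hMdef
  have hM2 : (2:ℝ) ≤ M := by nlinarith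
  have hMpos : (0:ℝ) < M := by linarith
  have hlogM : Real.log 2 ≤ Real.log M := Real.log_le_log (by norm_num) hM2
  -- hypothesis in natural log form
  have hn' : 3 * (M * Real.log M) ≤ (n:ℝ) * Real.log 2 := by
    rw [Real.logb] at hn
    have h1 := mul_le_mul_of_nonneg_right hn l2.le
    have h2 : 3 * (d:ℝ) * (h:ℝ) * (Real.log M / Real.log 2) * Real.log 2
        = 3 * (M * Real.log M) := by
      field_simp
      ring
    rw [h2] at h1
    exact h1
  have hn6 : (6:ℝ) ≤ (n:ℝ) := by nlinarith
  have hnpos : (0:ℝ) < (n:ℝ) := by linarith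
  -- piece A : 2h log h ≤ M log M - M log 2
  have hhM : 2 * (h:ℝ) ≤ M := by nlinarith
  have hloghpos : 0 ≤ Real.log h := Real.log_nonneg hhR
  have hlogh : Real.log h ≤ Real.log M - Real.log 2 := by
    have : Real.log h ≤ Real.log (M / 2) :=
      Real.log_le_log (by linarith) (by linarith)
    rwa [Real.log_div (by linarith) (by norm_num)] at this
  have hA : 2 * (h:ℝ) * Real.log h ≤ M * Real.log M - M * Real.log 2 := by
    nlinarith
  -- piece C : M log n ≤ n log 2 / 3 - M + M log 3 + M log M - M log (log 2)
  have hc : (0:ℝ) < 3 * M / Real.log 2 := by positivity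
  have hC1 : Real.log ((n:ℝ) / (3 * M / Real.log 2)) ≤ (n:ℝ) / (3 * M / Real.log 2) - 1 :=
    Real.log_le_sub_one_of_pos (by positivity)
  have hC2 : Real.log ((n:ℝ) / (3 * M / Real.log 2))
      = Real.log n - (Real.log 3 + Real.log M - Real.log (Real.log 2)) := by
    rw [Real.log_div hnpos.ne' hc.ne', Real.log_div (by positivity) l2.ne',
      Real.log_mul (by norm_num) hMpos.ne']
  have hC3 : (n:ℝ) / (3 * M / Real.log 2) = (n:ℝ) * Real.log 2 / (3 * M) := by
    field_simp
  have hC : M * Real.log n ≤ (n:ℝ) * Real.log 2 / 3 - M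
      + (M * Real.log 3 + M * Real.log M - M * Real.log (Real.log 2)) := by
    rw [hC2, hC3] at hC1
    have h4 := mul_le_mul_of_nonneg_left hC1 hMpos.le
    have hMd : M * ((n:ℝ) * Real.log 2 / (3 * M)) = (n:ℝ) * Real.log 2 / 3 := by
      field_simp
    nlinarith [h4]
  -- numeric fact : log 3 - log (log 2) - log 2 - 1 < 0
  have hcoef : Real.log 3 - Real.log (Real.log 2) - Real.log 2 - 1 < 0 := by
    have h3 : (3:ℝ) < 2 * Real.exp 1 * Real.log 2 := by
      nlinarith [Real.exp_one_gt_d9, Real.log_two_gt_d9]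
    have h5 := Real.log_lt_log (by norm_num) h3
    rw [Real.log_mul (by positivity) l2.ne', Real.log_mul (by norm_num) (Real.exp_pos 1).ne',
      Real.log_exp] at h5
    linarith
  have hcoefM : M * Real.log 3 - M * Real.log (Real.log 2) - M * Real.log 2 - M < 0 := by
    have h6 := mul_neg_of_pos_of_neg hMpos hcoef
    ring_nf at h6 ⊢
    linarith
  -- combine in log form
  have key : 2 * (h:ℝ) * Real.log h + M * Real.log n < (n:ℝ) * Real.log 2 := by
    linarith
  -- convert to the goal
  have hne : ((h:ℝ)) ≠ 0 := by linarith
  have hlt : Real.log ((h:ℝ) ^ (2*h) * (n:ℝ) ^ (d*h)) < Real.log ((2:ℝ) ^ n) := by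
    rw [Real.log_mul (pow_ne_zero _ hne) (pow_ne_zero _ hnpos.ne'),
      Real.log_pow, Real.log_pow, Real.log_pow]
    push_cast
    rw [← hMdef]
    linarith [key]
  exact (Real.log_lt_log_iff (by positivity) (by positivity)).mp hlt
end

section
/- Let D_1, …, D_m be linearly ordered sets and let X = D_1 × ⋯ × D_m. Let R be the family of all subsets of X of the form {x ∈ X : x_i ≤ a} or {x ∈ X : x_i ≥ a}, for some coordinate index i ∈ {1,…,m} and some a ∈ D_i. Then the VC-dimension of the range space (X, R) is at most m+1; that is, no finite subset of X of cardinality m+2 is shattered by R. -/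
/-- The ranges on `X = D₁ × ⋯ × D_m` given by single-clause selection queries
`{x : x_i ≤ a}` or `{x : x_i ≥ a}`. -/
def selectRanges {m : ℕ} (D : Fin m → Type*) [∀ i, LinearOrder (D i)] :
    Set (Set (∀ i, D i)) :=
  {s | ∃ (i : Fin m) (a : D i), s = {x | x i ≤ a} ∨ s = {x | a ≤ x i}}

open Set

section

variable {X : Type*}

theorem Shatters.mono {R R' : Set (Set X)} {A : Set X} (h : Shatters R A) (hR : R ⊆ R') :
    Shatters R' A := fun B hB => (h B hB).imp fun _ hr => ⟨hR hr.1, hr.2⟩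

def sublevelSets {β : Type*} [Preorder β] (f : X → β) : Set (Set X) :=
  range fun a => {x | f x ≤ a}

theorem isChain_sublevelSets {β : Type*} [LinearOrder β] (f : X → β) :
    IsChain (· ⊆ ·) (sublevelSets f) :=
  Monotone.isChain_range fun _ _ hab _ hx => le_trans hx hab

theorem Finset.eq_of_coe_inter_subset_of_card_eq {A B B' : Finset X} {r r' : Set X}
    (hB : (A : Set X) ∩ r = B) (hB' : (A : Set X) ∩ r' = B') (hrr' : r ⊆ r')
    (hcard : B.card = B'.card) : B = B' := by
  have hsub : B ⊆ B' := by
    rw [← Finset.coe_subset, ← hB, ← hB']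
    exact Set.inter_subset_inter_right _ hrr'
  exact Finset.eq_of_subset_of_card_le hsub hcard.ge

/-- Two of the `k`-element subsets of `A` would be traces of sets from the same chain. -/
theorem not_shatters_iUnion_of_isChain {ι : Type*} [Fintype ι] {C : ι → Set (Set X)}
    (hC : ∀ j, IsChain (· ⊆ ·) (C j)) {A : Finset X} {k : ℕ}
    (hk : Fintype.card ι < A.card.choose k) : ¬ Shatters (⋃ j, C j) A := by
  intro hA
  have htraces : ∀ B : A.powersetCard k, ∃ j, ∃ r ∈ C j, (A : Set X) ∩ r = B := by
    intro ⟨B, hB⟩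
    obtain ⟨r, hr, hAr⟩ := hA B (Finset.coe_subset.2 (Finset.mem_powersetCard.1 hB).1)
    obtain ⟨j, hj⟩ := mem_iUnion.1 hr
    exact ⟨j, r, hj, hAr⟩
  choose j r hr htrace using htraces
  obtain ⟨B, B', hne, hjj⟩ := Fintype.exists_ne_map_eq_of_card_lt j
    (by rwa [Fintype.card_coe, Finset.card_powersetCard])
  have hcard : B.1.card = B'.1.card := by
    rw [(Finset.mem_powersetCard.1 B.2).2, (Finset.mem_powersetCard.1 B'.2).2]
  apply hne
  rcases (hC (j B)).total (hr B) (hjj ▸ hr B') with hrr' | hrr'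
  · exact Subtype.ext (Finset.eq_of_coe_inter_subset_of_card_eq (htrace B) (htrace B') hrr' hcard)
  · exact Subtype.ext
      (Finset.eq_of_coe_inter_subset_of_card_eq (htrace B') (htrace B) hrr' hcard.symm).symm

end

theorem selectRanges_subset_iUnion_sublevelSets {m : ℕ} (D : Fin m → Type*)
    [∀ i, LinearOrder (D i)] :
    selectRanges D ⊆ ⋃ j, Sum.elim (fun i => sublevelSets (· i))
      (fun i => sublevelSets fun x => OrderDual.toDual (x i)) j := by
  rintro s ⟨i, a, rfl | rfl⟩
  · exact mem_iUnion.2 ⟨Sum.inl i, a, rfl⟩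
  · exact mem_iUnion.2 ⟨Sum.inr i, OrderDual.toDual a, rfl⟩

theorem add_self_lt_choose_two (m : ℕ) : m + m < (m + 2).choose 2 := by
  simp only [Nat.choose_succ_succ', Nat.choose_one_right, Nat.choose_zero_right, zero_add]
  omega

/-- The range space of single-clause selection queries on a table with `m` linearly
ordered columns has VC-dimension at most `m + 1`: no set of `m + 2` tuples is shattered. -/
theorem vcdim_selectRanges {m : ℕ} (D : Fin m → Type*) [∀ i, LinearOrder (D i)] :
    ∀ A : Finset (∀ i, D i), A.card = m + 2 →
      ¬ Shatters (selectRanges D) (A : Set (∀ i, D i)) := by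
  intro A hA hshatters
  refine not_shatters_iUnion_of_isChain (k := 2) ?_ ?_
    (hshatters.mono (selectRanges_subset_iUnion_sublevelSets D))
  · rintro (i | i) <;> exact isChain_sublevelSets _
  · rw [Fintype.card_sum, Fintype.card_fin, hA]
    exact add_self_lt_choose_two m
end

section
/- Let D_1, …, D_m be linearly ordered sets, X = D_1 × ⋯ × D_m, and let R be the family of all subsets of X of the form {x ∈ X : x_i ≤ a} or {x ∈ X : x_i ≥ a} for some coordinate i and a ∈ D_i. For b ≥ 1, let R_b be the family of all subsets of X obtainable as combinations of unions and intersections of b (not necessarily distinct) members of R. Then the VC-dimension of the range space (X, R_b) is at most 3·(m+1)·b·log₂((m+1)·b); that is, every finite subset of X shattered by R_b has cardinality at most 3·(m+1)·b·log₂((m+1)·b). -/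
/-!
On a finite set `A` a range is seen only through its trace `A ∩ r`, and traces commute with
`∪` and `∩`. Splitting a combination of `b` ranges at its root therefore bounds the number of
traces of `combos R b` by `(2b)^(b-1) k^b`, where `k` is the number of traces of `R`. The
single-clause ranges form `2m` chains, and a chain has at most `|A| + 1` traces, so
`k ≤ 2m(|A| + 1)`. Shattering `A` needs all `2^|A|` subsets as traces, whence
`2^n ≤ (4bm(n+1))^b` for `n = |A|`. Finally `n - b log₂(n+1)` is increasing once
`(n+1) ln 2 > b`, so it suffices to check the inequality at `n = 3(m+1)b log₂((m+1)b)`.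
-/

section

open Set Real

variable {X : Type*}

def trace (F : Set (Set X)) (A : Set X) : Set (Set X) := (A ∩ ·) '' F

theorem Set.encard_image2_le {α β γ : Type*} (f : α → β → γ) (s : Set α) (t : Set β) :
    (image2 f s t).encard ≤ s.encard * t.encard := by
  rw [← image_prod, ← encard_prod]
  exact encard_image_le _ _

theorem two_pow_card_le_encard_trace {F : Set (Set X)} {A : Finset X} (hA : Shatters F A) :
    2 ^ A.card ≤ (trace F A).encard := by
  have hpow : 𝒫 (A : Set X) ⊆ trace F A := fun B hB => by
    obtain ⟨r, hr, hrB⟩ := hA B hB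
    exact ⟨r, hr, hrB⟩
  calc (2 ^ A.card : ℕ∞) = (𝒫 (A : Set X)).encard := by
        rw [← (A.finite_toSet.powerset).cast_ncard_eq, ncard_powerset _ A.finite_toSet,
          ncard_coe_finset]
        norm_cast
    _ ≤ (trace F A).encard := encard_le_encard hpow

theorem encard_trace_image2_le {op : Set X → Set X → Set X} (F G : Set (Set X)) (A : Set X)
    (hop : ∀ s t, A ∩ op s t = op (A ∩ s) (A ∩ t)) :
    (trace (image2 op F G) A).encard ≤ (trace F A).encard * (trace G A).encard := by
  rw [trace, image_image2_distrib hop]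
  exact encard_image2_le _ _ _

theorem IsChain.encard_trace_le {C : Set (Set X)} (hC : IsChain (· ⊆ ·) C) (A : Set X) :
    (trace C A).encard ≤ A.encard + 1 := by
  obtain hA | hA := A.finite_or_infinite
  · have hchain : IsChain (· ⊆ ·) (trace C A) :=
      hC.image_of_map_rel _ _ _ fun _ _ h => inter_subset_inter_right A h
    have hmaps : MapsTo ncard (trace C A) (Finset.range (A.ncard + 1) : Set ℕ) := by
      rintro _ ⟨s, -, rfl⟩
      simpa [Nat.lt_succ_iff] using ncard_le_ncard inter_subset_left hA
    have hinj : InjOn ncard (trace C A) := by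
      intro u hu v hv huv
      have hfin : ∀ w ∈ trace C A, w.Finite := by
        rintro _ ⟨s, -, rfl⟩
        exact hA.subset inter_subset_left
      obtain huv' | hvu := hchain.total hu hv
      · exact eq_of_subset_of_ncard_le huv' huv.ge (hfin v hv)
      · exact (eq_of_subset_of_ncard_le hvu huv.le (hfin u hu)).symm
    calc (trace C A).encard ≤ (Finset.range (A.ncard + 1) : Set ℕ).encard :=
          encard_le_encard_of_injOn hmaps hinj
      _ = A.encard + 1 := by
          rw [encard_coe_eq_coe_finsetCard, Finset.card_range, ← hA.cast_ncard_eq]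
          norm_cast
  · simp [hA.encard_eq]

theorem selectRanges_eq_iUnion {m : ℕ} (D : Fin m → Type*) [∀ i, LinearOrder (D i)] :
    selectRanges D =
      ⋃ i, (range fun a : D i => {x | x i ≤ a}) ∪ range fun a : D i => {x | a ≤ x i} := by
  ext s
  simp [selectRanges, exists_or, eq_comm]

theorem encard_trace_selectRanges_le {m : ℕ} (D : Fin m → Type*) [∀ i, LinearOrder (D i)]
    (A : Set (∀ i, D i)) : (trace (selectRanges D) A).encard ≤ 2 * m * (A.encard + 1) := by
  have hle : ∀ i : Fin m, (trace ((range fun a : D i => {x | x i ≤ a}) ∪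
      range fun a : D i => {x | a ≤ x i}) A).encard ≤ 2 * (A.encard + 1) := by
    intro i
    have hlow : Monotone fun a : D i => {x : ∀ i, D i | x i ≤ a} :=
      fun _ _ hab _ hx => le_trans hx hab
    have hup : Antitone fun a : D i => {x : ∀ i, D i | a ≤ x i} :=
      fun _ _ hab _ hx => le_trans hab hx
    rw [trace, image_union, two_mul]
    exact (encard_union_le _ _).trans
      (add_le_add (hlow.isChain_range.encard_trace_le A) (hup.isChain_range.encard_trace_le A))
  calc (trace (selectRanges D) A).encard
      ≤ ∑ i : Fin m, (trace ((range fun a : D i => {x | x i ≤ a}) ∪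
          range fun a : D i => {x | a ≤ x i}) A).encard := by
        rw [selectRanges_eq_iUnion, trace, image_iUnion]
        exact encard_iUnion_le_of_fintype _
    _ ≤ ∑ _i : Fin m, 2 * (A.encard + 1) := Finset.sum_le_sum fun i _ => hle i
    _ = 2 * m * (A.encard + 1) := by simp [mul_assoc, mul_left_comm]

theorem SetCombo.one_le_size (c : SetCombo X) : 1 ≤ c.size := by
  induction c <;> simp only [SetCombo.size] <;> omega

theorem combos_zero (R : Set (Set X)) : combos R 0 = ∅ :=
  eq_empty_of_forall_notMem fun _ ⟨c, hc, _⟩ => by have := c.one_le_size; omega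

theorem combos_one (R : Set (Set X)) : combos R 1 = R := by
  ext s
  constructor
  · rintro ⟨c, hc, hR, rfl⟩
    cases c with
    | leaf s => exact hR
    | union c₁ c₂ | inter c₁ c₂ =>
      have := c₁.one_le_size; have := c₂.one_le_size
      simp only [SetCombo.size] at hc; omega
  · exact fun hs => ⟨.leaf s, rfl, hs, rfl⟩

theorem combos_subset_biUnion (R : Set (Set X)) {b : ℕ} (hb : 2 ≤ b) :
    combos R b ⊆ ⋃ i ∈ Finset.Ioo 0 b,
      image2 (· ∪ ·) (combos R i) (combos R (b - i)) ∪
        image2 (· ∩ ·) (combos R i) (combos R (b - i)) := by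
  rintro _ ⟨c, rfl, hR, rfl⟩
  cases c with
  | leaf s => simp [SetCombo.size] at hb
  | union c₁ c₂ | inter c₁ c₂ =>
    refine mem_iUnion₂.2 ⟨c₁.size, Finset.mem_Ioo.2 ⟨c₁.one_le_size, ?_⟩, ?_⟩
    · have := c₂.one_le_size; simp only [SetCombo.size]; omega
    simp only [SetCombo.size, SetCombo.eval, Nat.add_sub_cancel_left]
    have h₁ : c₁.eval ∈ combos R c₁.size := ⟨c₁, rfl, hR.1, rfl⟩
    have h₂ : c₂.eval ∈ combos R c₂.size := ⟨c₂, rfl, hR.2, rfl⟩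
    first
    | exact .inl (mem_image2_of_mem h₁ h₂)
    | exact .inr (mem_image2_of_mem h₁ h₂)

theorem encard_trace_combos_le_sum (R : Set (Set X)) (A : Set X) {b : ℕ} (hb : 2 ≤ b) :
    (trace (combos R b) A).encard ≤ ∑ i ∈ Finset.Ioo 0 b,
      2 * ((trace (combos R i) A).encard * (trace (combos R (b - i)) A).encard) := by
  calc (trace (combos R b) A).encard
      ≤ (⋃ i ∈ Finset.Ioo 0 b,
          trace (image2 (· ∪ ·) (combos R i) (combos R (b - i))) A ∪
          trace (image2 (· ∩ ·) (combos R i) (combos R (b - i))) A).encard := by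
        simp only [trace, ← image_union, ← image_iUnion₂]
        exact encard_le_encard (image_mono (combos_subset_biUnion R hb))
    _ ≤ _ := (Finset.set_encard_biUnion_le _ _).trans <| Finset.sum_le_sum fun i _ => by
        rw [two_mul]
        exact (encard_union_le _ _).trans <| add_le_add
          (encard_trace_image2_le _ _ A fun _ _ => inter_union_distrib_left _ _ _)
          (encard_trace_image2_le _ _ A fun _ _ => inter_inter_distrib_left _ _ _)

theorem sum_Ioo_two_mul_pow_mul_pow_le (b : ℕ) :
    ∑ i ∈ Finset.Ioo 0 b, 2 * ((2 * i) ^ (i - 1) * (2 * (b - i)) ^ (b - i - 1)) ≤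
      (2 * b) ^ (b - 1) := by
  obtain hb | hb := lt_or_ge b 2
  · interval_cases b <;> decide
  have hterm : ∀ i ∈ Finset.Ioo 0 b,
      2 * ((2 * i) ^ (i - 1) * (2 * (b - i)) ^ (b - i - 1)) ≤ 2 * (2 * b) ^ (b - 2) := by
    intro i hi
    obtain ⟨hi₀, hib⟩ := Finset.mem_Ioo.1 hi
    calc 2 * ((2 * i) ^ (i - 1) * (2 * (b - i)) ^ (b - i - 1))
        ≤ 2 * ((2 * b) ^ (i - 1) * (2 * b) ^ (b - i - 1)) := by gcongr; omega
      _ = 2 * (2 * b) ^ (b - 2) := by rw [← pow_add]; congr 2; omega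
  calc _ ≤ ∑ _i ∈ Finset.Ioo 0 b, 2 * (2 * b) ^ (b - 2) := Finset.sum_le_sum hterm
    _ = (b - 1) * (2 * (2 * b) ^ (b - 2)) := by simp
    _ ≤ 2 * b * (2 * b) ^ (b - 2) := by
        rw [← mul_assoc]; exact Nat.mul_le_mul_right _ (by omega)
    _ = (2 * b) ^ (b - 1) := by rw [← pow_succ']; congr 1; omega

theorem encard_trace_combos_le (R : Set (Set X)) (A : Set X) (b : ℕ) :
    (trace (combos R b) A).encard ≤ ((2 * b) ^ (b - 1) : ℕ) * (trace R A).encard ^ b := by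
  induction b using Nat.strong_induction_on with
  | _ b ih =>
  obtain rfl | rfl | hb : b = 0 ∨ b = 1 ∨ 2 ≤ b := by omega
  · simp [combos_zero, trace]
  · simp [combos_one]
  set k := (trace R A).encard
  calc (trace (combos R b) A).encard
      ≤ ∑ i ∈ Finset.Ioo 0 b,
          2 * ((trace (combos R i) A).encard * (trace (combos R (b - i)) A).encard) :=
        encard_trace_combos_le_sum R A hb
    _ ≤ ∑ i ∈ Finset.Ioo 0 b, 2 * ((((2 * i) ^ (i - 1) : ℕ) * k ^ i) *
          (((2 * (b - i)) ^ (b - i - 1) : ℕ) * k ^ (b - i))) := by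
        gcongr with i hi <;> have := Finset.mem_Ioo.1 hi
        · exact ih i (by omega)
        · exact ih (b - i) (by omega)
    _ = ((∑ i ∈ Finset.Ioo 0 b, 2 * ((2 * i) ^ (i - 1) * (2 * (b - i)) ^ (b - i - 1)) : ℕ) :
          ℕ∞) * k ^ b := by
        push_cast
        rw [Finset.sum_mul]
        refine Finset.sum_congr rfl fun i hi => ?_
        have hk : k ^ b = k ^ i * k ^ (b - i) := by
          rw [← pow_add]; congr; have := Finset.mem_Ioo.1 hi; omega
        rw [hk]; ring
    _ ≤ ((2 * b) ^ (b - 1) : ℕ) * k ^ b := by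
        gcongr; exact_mod_cast sum_Ioo_two_mul_pow_mul_pow_le b

theorem le_of_le_add_mul_logb {x t c β : ℝ} (ht : 0 ≤ t) (hβ₀ : 0 ≤ β)
    (hβ : β < (t + 1) * log 2) (htc : c + β * logb 2 (t + 1) ≤ t)
    (h : x ≤ c + β * logb 2 (x + 1)) : x ≤ t := by
  by_contra! hxt
  have hden : 0 < (t + 1) * log 2 := by positivity
  have htangent : logb 2 (x + 1) ≤ logb 2 (t + 1) + (x - t) / ((t + 1) * log 2) := by
    have hratio := log_le_sub_one_of_pos
      (div_pos (by linarith : 0 < x + 1) (by linarith : 0 < t + 1))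
    have hsub : (x + 1) / (t + 1) - 1 = (x - t) / (t + 1) := by field_simp; ring
    rw [log_div (by linarith) (by linarith), hsub] at hratio
    rw [logb, logb, ← div_div, ← add_div]
    gcongr
    linarith
  have hslope : β * ((x - t) / ((t + 1) * log 2)) < x - t := by
    rw [mul_div_assoc', div_lt_iff₀ hden]
    nlinarith
  have : x < x :=
    calc x ≤ c + β * logb 2 (x + 1) := h
      _ ≤ c + β * (logb 2 (t + 1) + (x - t) / ((t + 1) * log 2)) := by gcongr
      _ < x := by rw [mul_add]; linarith
  exact lt_irrefl x this

theorem one_le_logb_add_one_mul {m b : ℝ} (hm : 1 ≤ m) (hb : 1 ≤ b) :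
    1 ≤ logb 2 ((m + 1) * b) := by
  calc 1 = logb 2 2 := (logb_self_eq_one one_lt_two).symm
    _ ≤ logb 2 ((m + 1) * b) := logb_le_logb_of_le one_lt_two two_pos (by nlinarith)

theorem mul_logb_add_mul_logb_le {m b : ℝ} (hm : 1 ≤ m) (hb : 1 ≤ b) :
    b * logb 2 (4 * b * m) + b * logb 2 (3 * (m + 1) * b * logb 2 ((m + 1) * b) + 1) ≤
      3 * (m + 1) * b * logb 2 ((m + 1) * b) := by
  set M := m + 1 with hM
  set L := logb 2 (M * b)
  have hM2 : 2 ≤ M := by linarith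
  have hlog2 : 1 / 2 < log 2 := by linarith [log_two_gt_d9]
  have hL : 1 ≤ L := one_le_logb_add_one_mul hm hb
  have hlogb4 : logb 2 4 = 2 := by
    rw [show (4 : ℝ) = 2 ^ (2 : ℕ) by norm_num, logb_pow, logb_self_eq_one one_lt_two]; ring
  have hlogL : logb 2 L ≤ 2 * (L - 1) := by
    rw [logb, div_le_iff₀ (by linarith)]
    nlinarith [log_le_sub_one_of_pos (by linarith : 0 < L)]
  have h₁ : logb 2 (4 * b * m) ≤ 2 + L := by
    calc logb 2 (4 * b * m) ≤ logb 2 (4 * (M * b)) :=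
          logb_le_logb_of_le one_lt_two (by positivity) (by nlinarith)
      _ = 2 + L := by rw [logb_mul (by norm_num) (by positivity), hlogb4]
  have h₂ : logb 2 (3 * M * b * L + 1) ≤ 2 + L + logb 2 L := by
    calc logb 2 (3 * M * b * L + 1) ≤ logb 2 (4 * (M * b) * L) :=
          logb_le_logb_of_le one_lt_two (by positivity)
            (by nlinarith [mul_le_mul hM2 hb zero_le_one (by linarith)])
      _ = 2 + L + logb 2 L := by
          rw [logb_mul (by positivity) (by positivity), logb_mul (by norm_num) (by positivity),
            hlogb4]
  calc b * logb 2 (4 * b * m) + b * logb 2 (3 * M * b * L + 1)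
      ≤ b * (2 + L) + b * (2 + L + 2 * (L - 1)) := by gcongr; linarith
    _ ≤ 3 * M * b * L := by
        nlinarith [mul_nonneg (mul_nonneg (by linarith : 0 ≤ M - 2) (by linarith : 0 ≤ b))
          (by linarith : 0 ≤ L), mul_nonneg (by linarith : 0 ≤ b) (by linarith : 0 ≤ L - 1)]

theorem le_three_mul_logb_of_two_pow_le {n m b : ℕ} (hb : 1 ≤ b)
    (h : 2 ^ n ≤ (4 * b * m * (n + 1)) ^ b) :
    (n : ℝ) ≤ 3 * (m + 1) * b * logb 2 ((m + 1) * b) := by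
  have hm : 1 ≤ m := by
    by_contra! hm
    simp [Nat.lt_one_iff.1 hm, zero_pow (by omega : b ≠ 0)] at h
  have hb' : (1 : ℝ) ≤ b := by exact_mod_cast hb
  have hm' : (1 : ℝ) ≤ m := by exact_mod_cast hm
  have hlog : (n : ℝ) ≤ b * logb 2 (4 * b * m) + b * logb 2 (n + 1) := by
    have hreal : (2 : ℝ) ^ n ≤ (4 * b * m * (n + 1)) ^ b := by exact_mod_cast h
    have := logb_le_logb_of_le one_lt_two (by positivity) hreal
    rwa [logb_pow, logb_pow, logb_self_eq_one one_lt_two, mul_one,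
      logb_mul (by positivity) (by positivity), mul_add] at this
  have hL := one_le_logb_add_one_mul hm' hb'
  refine le_of_le_add_mul_logb (by positivity) (by positivity) ?_
    (mul_logb_add_mul_logb_le hm' hb') hlog
  have ht : 6 * (b : ℝ) ≤ 3 * (m + 1) * b * logb 2 ((m + 1) * b) := by
    nlinarith [mul_le_mul hm' hL zero_le_one (by linarith)]
  nlinarith [log_two_gt_d9]

end

/-- The range space of selection queries whose predicate is a Boolean combination of
`b` single-clause conditions on a table with `m` linearly ordered columns has
VC-dimension at most `3 (m+1) b log₂((m+1) b)`. -/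
theorem vcdim_selectRanges_boolean {m : ℕ} (D : Fin m → Type*) [∀ i, LinearOrder (D i)]
    (b : ℕ) (hb : 1 ≤ b) :
    ∀ A : Finset (∀ i, D i), Shatters (combos (selectRanges D) b) (A : Set (∀ i, D i)) →
      (A.card : ℝ) ≤ 3 * (m + 1) * b * Real.logb 2 ((m + 1) * b) := by
  intro A hA
  have hcount : (2 ^ A.card : ℕ∞) ≤ ((4 * b * m * (A.card + 1)) ^ b : ℕ) :=
    calc (2 ^ A.card : ℕ∞) ≤ (trace (combos (selectRanges D) b) A).encard :=
          two_pow_card_le_encard_trace hA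
      _ ≤ ((2 * b) ^ (b - 1) : ℕ) * (trace (selectRanges D) A).encard ^ b :=
          encard_trace_combos_le _ _ b
      _ ≤ ((2 * b) ^ (b - 1) : ℕ) * ((2 * m * (A.card + 1) : ℕ) : ℕ∞) ^ b := by
          gcongr
          simpa using encard_trace_selectRanges_le D A
      _ ≤ ((4 * b * m * (A.card + 1)) ^ b : ℕ) := by
          norm_cast
          calc (2 * b) ^ (b - 1) * (2 * m * (A.card + 1)) ^ b
              ≤ (2 * b) ^ b * (2 * m * (A.card + 1)) ^ b := by
                gcongr <;> omega
            _ = (4 * b * m * (A.card + 1)) ^ b := by rw [← mul_pow]; ring_nf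
  exact le_three_mul_logb_of_two_pow_le hb (by exact_mod_cast hcount)
end

section
/- Let (X₁, R₁) and (X₂, R₂) be range spaces with VC-dimensions at most v₁ and v₂ respectively, where v₁, v₂ ≥ 2. Let α be a linearly ordered set and let f₁ : X₁ → α and f₂ : X₂ → α. For r₁ ∈ R₁, r₂ ∈ R₂ and op one of the six relations {<, >, ≤, ≥, =, ≠} on α, define J^{op}_{r₁,r₂} = {(t₁,t₂) ∈ X₁ × X₂ : t₁ ∈ r₁, t₂ ∈ r₂, f₁(t₁) op f₂(t₂)}, and let J be the family of all such sets. Then the VC-dimension of the range space (X₁ × X₂, J) is at most 3·(v₁+v₂)·log₂(v₁+v₂); that is, every finite subset of X₁ × X₂ shattered by J has cardinality at most 3·(v₁+v₂)·log₂(v₁+v₂). -/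
/-- The six comparison relations `<, >, ≤, ≥, =, ≠` on a linearly ordered set. -/
def sixRels (α : Type*) [LinearOrder α] : Set (α → α → Prop) :=
  {fun a b => a < b, fun a b => b < a, fun a b => a ≤ b,
   fun a b => b ≤ a, fun a b => a = b, fun a b => a ≠ b}

/-- The family of outputs of join queries: the range `J^{op}_{r₁,r₂}` consists of the
pairs `(t₁,t₂)` with `t₁ ∈ r₁`, `t₂ ∈ r₂` and `f₁ t₁ op f₂ t₂`. -/
def joinRanges {X₁ X₂ α : Type*} [LinearOrder α] (R₁ : Set (Set X₁)) (R₂ : Set (Set X₂))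
    (f₁ : X₁ → α) (f₂ : X₂ → α) : Set (Set (X₁ × X₂)) :=
  {s | ∃ r₁ ∈ R₁, ∃ r₂ ∈ R₂, ∃ op ∈ sixRels α,
    s = {p : X₁ × X₂ | p.1 ∈ r₁ ∧ p.2 ∈ r₂ ∧ op (f₁ p.1) (f₂ p.2)}}

lemma analytic (v n : ℕ) (hv : 4 ≤ v) (hx : 3 * (v : ℝ) * Real.logb 2 v < n) :
    (6 : ℝ) * ((n : ℝ) + 1) ^ v < 2 ^ n := by
  set l : ℝ := Real.log 2 with hl
  have hl1 : (0.6931471803 : ℝ) < l := Real.log_two_gt_d9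
  have hl2 : l < 0.6931471808 := Real.log_two_lt_d9
  set V : ℝ := (v : ℝ) with hV
  have hV4 : (4 : ℝ) ≤ V := by rw [hV]; exact_mod_cast hv
  set L : ℝ := Real.logb 2 V with hL
  have hL2 : (2 : ℝ) ≤ L := by
    have h4 : Real.logb 2 (4 : ℝ) = 2 := by
      rw [show (4:ℝ) = 2 ^ (2:ℕ) by norm_num, Real.logb_pow,
        Real.logb_self_eq_one (by norm_num)]
      norm_num
    calc (2:ℝ) = Real.logb 2 4 := h4.symm
      _ ≤ L := Real.logb_le_logb_of_le (by norm_num) (by norm_num) (by linarith)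
  set x : ℝ := (n : ℝ) with hxdef
  have hV0 : (0:ℝ) < V := by linarith
  have hL0 : (0:ℝ) < L := by linarith
  have ha0 : (0:ℝ) < 3 * V * L := by positivity
  have hx0 : (0:ℝ) < x := lt_trans ha0 hx
  -- log (x+1) bound
  have hlogx : Real.log (x + 1) ≤ Real.log (3*V*L) + ((x+1)/(3*V*L) - 1) := by
    have h1 : Real.log ((x+1)/(3*V*L)) ≤ (x+1)/(3*V*L) - 1 :=
      Real.log_le_sub_one_of_pos (by positivity)
    rw [Real.log_div (by positivity) (by positivity)] at h1
    linarith
  have hlogV : Real.log V = L * l := by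
    rw [hL, Real.logb, div_mul_cancel₀]
    simpa using Real.log_ne_zero_of_pos_of_ne_one (show (0:ℝ) < 2 by norm_num) (by norm_num)
  have hlogL : Real.log L ≤ (L - 1) * l := by
    have h1 : Real.log (L/2) ≤ L/2 - 1 := Real.log_le_sub_one_of_pos (by positivity)
    rw [Real.log_div (by positivity) (by norm_num)] at h1
    nlinarith
  have hlog3 : Real.log 3 ≤ (8/5) * l := by
    have h1 : Real.log ((3:ℝ)^(5:ℕ)) ≤ Real.log ((2:ℝ)^(8:ℕ)) :=
      Real.log_le_log (by positivity) (by norm_num)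
    rw [Real.log_pow, Real.log_pow] at h1
    push_cast at h1
    linarith
  have hlog3VL : Real.log (3*V*L) = Real.log 3 + Real.log V + Real.log L := by
    rw [Real.log_mul (by positivity) (by positivity),
        Real.log_mul (by norm_num) (by positivity)]
  -- scaled
  have hdivid : V * ((x+1)/(3*V*L)) = (x+1)/(3*L) := by
    field_simp
  have hfrac : (x+1)/(3*L) ≤ (x+1)/6 := by
    apply div_le_div_of_nonneg_left (by linarith) (by norm_num) (by linarith)
  have hVlogx : V * Real.log (x+1) ≤ V * Real.log 3 + V * (L*l) + V * Real.log L
      + ((x+1)/6 - V) := by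
    have := mul_le_mul_of_nonneg_left hlogx (le_of_lt hV0)
    rw [mul_add, mul_sub, hdivid] at this
    rw [hlog3VL, hlogV] at this
    nlinarith
  -- final comparison via logs
  have key : Real.log 6 + V * Real.log (x+1) < x * l := by
    have hVlgL : V * Real.log L ≤ V * ((L-1)*l) :=
      mul_le_mul_of_nonneg_left hlogL (le_of_lt hV0)
    have hVlg3 : V * Real.log 3 ≤ V * ((8/5)*l) :=
      mul_le_mul_of_nonneg_left hlog3 (le_of_lt hV0)
    have hlog6 : Real.log 6 = l + Real.log 3 := by
      rw [show (6:ℝ) = 2*3 by norm_num, Real.log_mul (by norm_num) (by norm_num)]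
    have hprod : 0 < (x - 3*V*L) * (l - 1/6) := by
      apply mul_pos (by linarith) (by linarith)
    have hVL : 0 ≤ V * L * (2*l - 1) := by
      apply mul_nonneg (by positivity) (by linarith)
    nlinarith [mul_pos hV0 hL0, mul_le_mul_of_nonneg_left hl2.le (le_of_lt hV0)]
  -- conclude
  have hpos1 : (0:ℝ) < 6 * (x+1)^v := by positivity
  have hpos2 : (0:ℝ) < (2:ℝ)^n := by positivity
  rw [← Real.log_lt_log_iff hpos1 hpos2]
  rw [Real.log_mul (by norm_num) (by positivity), Real.log_pow, Real.log_pow]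
  calc Real.log 6 + (v:ℝ) * Real.log (x+1) < x * l := key
    _ = (n:ℝ) * Real.log 2 := by rw [hxdef]

lemma sum_choose_le_pow (m v : ℕ) :
    ∑ i ∈ Finset.range (v+1), m.choose i ≤ (m+1)^v := by
  induction v with
  | zero => simp
  | succ v ih =>
    rw [Finset.sum_range_succ, pow_succ]
    have h1 : m.choose (v+1) ≤ m^(v+1) := Nat.choose_le_pow m (v+1)
    have h2 : m^(v+1) ≤ m*(m+1)^v := by
      rw [pow_succ']
      exact Nat.mul_le_mul_left m (Nat.pow_le_pow_left (Nat.le_succ m) v)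
    nlinarith [ih]

lemma trace_card_le {X : Type*} [DecidableEq X] (R : Set (Set X)) (v : ℕ)
    (hdim : ∀ A : Finset X, Shatters R (A : Set X) → A.card ≤ v)
    (A₁ : Finset X) (𝒜 : Finset (Finset X))
    (h𝒜 : ∀ s ∈ 𝒜, s ⊆ A₁ ∧ ∃ r ∈ R, ∀ x ∈ A₁, (x ∈ s ↔ x ∈ r)) :
    𝒜.card ≤ (A₁.card + 1)^v := by
  classical
  refine le_trans 𝒜.card_le_card_shatterer ?_
  refine le_trans (Finset.card_le_card (?_ : 𝒜.shatterer ⊆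
    (Finset.range (v+1)).biUnion fun i => A₁.powersetCard i)) ?_
  · intro s hs
    rw [Finset.mem_shatterer] at hs
    have hsA : s ⊆ A₁ := by
      obtain ⟨t, ht, hst⟩ := hs.exists_superset
      exact hst.trans (h𝒜 t ht).1
    have hshat : Shatters R (s : Set X) := by
      intro B hB
      have hBs : ∀ x ∈ s.filter (· ∈ B), x ∈ s := fun x hx => (Finset.mem_filter.1 hx).1
      obtain ⟨u, hu, hsu⟩ := hs (Finset.filter_subset (· ∈ B) s)
      obtain ⟨hu1, r, hr, hur⟩ := h𝒜 u hu
      refine ⟨r, hr, ?_⟩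
      ext x
      simp only [Set.mem_inter_iff, Finset.mem_coe]
      constructor
      · rintro ⟨hxs, hxr⟩
        have : x ∈ u := (hur x (hsA hxs)).2 hxr
        have : x ∈ s ∩ u := Finset.mem_inter.2 ⟨hxs, this⟩
        rw [hsu, Finset.mem_filter] at this
        exact this.2
      · intro hxB
        have hxs : x ∈ s := hB hxB
        refine ⟨hxs, ?_⟩
        have : x ∈ s ∩ u := by
          rw [hsu, Finset.mem_filter]; exact ⟨hxs, hxB⟩
        exact (hur x (hsA hxs)).1 (Finset.mem_inter.1 this).2
    have hcard : s.card ≤ v := hdim s hshat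
    exact Finset.mem_biUnion.2 ⟨s.card, Finset.mem_range.2 (Nat.lt_succ_of_le hcard),
      Finset.mem_powersetCard.2 ⟨hsA, rfl⟩⟩
  · refine le_trans (Finset.card_biUnion_le) ?_
    calc ∑ i ∈ Finset.range (v+1), (A₁.powersetCard i).card
        = ∑ i ∈ Finset.range (v+1), A₁.card.choose i := by
          simp [Finset.card_powersetCard]
      _ ≤ (A₁.card + 1)^v := sum_choose_le_pow _ _

/-- If `(X₁,R₁)` and `(X₂,R₂)` have VC-dimension at most `v₁ ≥ 2` and `v₂ ≥ 2`, then
the range space of join queries has VC-dimension at most `3 (v₁+v₂) log₂(v₁+v₂)`. -/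
theorem vcdim_joinRanges {X₁ X₂ α : Type*} [LinearOrder α]
    (R₁ : Set (Set X₁)) (R₂ : Set (Set X₂)) (f₁ : X₁ → α) (f₂ : X₂ → α)
    (v₁ v₂ : ℕ) (hv₁ : 2 ≤ v₁) (hv₂ : 2 ≤ v₂)
    (hdim₁ : ∀ A : Finset X₁, Shatters R₁ (A : Set X₁) → A.card ≤ v₁)
    (hdim₂ : ∀ A : Finset X₂, Shatters R₂ (A : Set X₂) → A.card ≤ v₂) :
    ∀ A : Finset (X₁ × X₂), Shatters (joinRanges R₁ R₂ f₁ f₂) (A : Set (X₁ × X₂)) →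
      (A.card : ℝ) ≤ 3 * (v₁ + v₂) * Real.logb 2 (v₁ + v₂) := by
  classical
  intro A hA
  by_contra hcon
  push_neg at hcon
  set n := A.card with hn
  set v := v₁ + v₂ with hv
  set A₁ := A.image Prod.fst with hA₁def
  set A₂ := A.image Prod.snd with hA₂def
  set 𝒜₁ : Finset (Finset X₁) :=
    A₁.powerset.filter (fun s => ∃ r ∈ R₁, ∀ x ∈ A₁, (x ∈ s ↔ x ∈ r)) with h𝒜₁def
  set 𝒜₂ : Finset (Finset X₂) :=
    A₂.powerset.filter (fun s => ∃ r ∈ R₂, ∀ x ∈ A₂, (x ∈ s ↔ x ∈ r)) with h𝒜₂def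
  set rel : Fin 6 → (α → α → Prop) :=
    ![fun a b => a < b, fun a b => b < a, fun a b => a ≤ b,
      fun a b => b ≤ a, fun a b => a = b, fun a b => a ≠ b] with hreldef
  set ψ : Finset X₁ × Finset X₂ × Fin 6 → Finset (X₁ × X₂) :=
    fun t => A.filter (fun p => p.1 ∈ t.1 ∧ p.2 ∈ t.2.1 ∧ rel t.2.2 (f₁ p.1) (f₂ p.2))
    with hψdef
  have hsub : A.powerset ⊆
      ((𝒜₁ ×ˢ 𝒜₂ ×ˢ (Finset.univ : Finset (Fin 6))).image ψ) := by
    intro B hB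
    rw [Finset.mem_powerset] at hB
    obtain ⟨J, hJ, hAJ⟩ := hA (↑B) (Finset.coe_subset.2 hB)
    obtain ⟨r₁, hr₁, r₂, hr₂, op, hop, rfl⟩ := hJ
    have hopi : ∃ i : Fin 6, rel i = op := by
      simp only [sixRels, Set.mem_insert_iff, Set.mem_singleton_iff] at hop
      rcases hop with h|h|h|h|h|h
      exacts [⟨0, by rw [hreldef, h]; rfl⟩, ⟨1, by rw [hreldef, h]; rfl⟩,
        ⟨2, by rw [hreldef, h]; rfl⟩, ⟨3, by rw [hreldef, h]; rfl⟩,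
        ⟨4, by rw [hreldef, h]; rfl⟩, ⟨5, by rw [hreldef, h]; rfl⟩]
    obtain ⟨i, hi⟩ := hopi
    refine Finset.mem_image.2 ⟨(A₁.filter (· ∈ r₁), A₂.filter (· ∈ r₂), i), ?_, ?_⟩
    · rw [Finset.mem_product]
      constructor
      · rw [h𝒜₁def, Finset.mem_filter, Finset.mem_powerset]
        exact ⟨Finset.filter_subset _ _,
          ⟨r₁, hr₁, fun x hx => by simp [Finset.mem_filter, hx]⟩⟩
      rw [Finset.mem_product]
      constructor
      · rw [h𝒜₂def, Finset.mem_filter, Finset.mem_powerset]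
        exact ⟨Finset.filter_subset _ _,
          ⟨r₂, hr₂, fun x hx => by simp [Finset.mem_filter, hx]⟩⟩
      · exact Finset.mem_univ i
    · ext p
      have hmemJ : p ∈ (↑B : Set (X₁ × X₂)) ↔ p ∈ (↑A : Set (X₁ × X₂)) ∧
          (p.1 ∈ r₁ ∧ p.2 ∈ r₂ ∧ op (f₁ p.1) (f₂ p.2)) := by
        rw [← hAJ]; simp [Set.mem_inter_iff]
      simp only [Finset.mem_coe, Set.mem_setOf_eq] at hmemJ
      rw [hψdef]
      simp only [Finset.mem_filter, Finset.mem_coe, hi]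
      constructor
      · rintro ⟨hpA, ⟨-, h1⟩, ⟨-, h2⟩, h3⟩
        exact hmemJ.2 ⟨hpA, h1, h2, h3⟩
      · intro hpB
        obtain ⟨hpA, hp1, hp2, hp3⟩ := hmemJ.1 hpB
        exact ⟨hpA, ⟨Finset.mem_image.2 ⟨p, hpA, rfl⟩, hp1⟩,
          ⟨Finset.mem_image.2 ⟨p, hpA, rfl⟩, hp2⟩, hp3⟩
  have hcount : 2^n ≤ 𝒜₁.card * (𝒜₂.card * 6) := by
    calc 2^n = A.powerset.card := (Finset.card_powerset A).symm
      _ ≤ ((𝒜₁ ×ˢ 𝒜₂ ×ˢ (Finset.univ : Finset (Fin 6))).image ψ).card :=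
          Finset.card_le_card hsub
      _ ≤ (𝒜₁ ×ˢ 𝒜₂ ×ˢ (Finset.univ : Finset (Fin 6))).card := Finset.card_image_le
      _ = 𝒜₁.card * (𝒜₂.card * 6) := by
          simp [Finset.card_product]
  have hA₁card : A₁.card ≤ n := by
    rw [hA₁def, hn]; exact Finset.card_image_le
  have hA₂card : A₂.card ≤ n := by
    rw [hA₂def, hn]; exact Finset.card_image_le
  have hS₁ : 𝒜₁.card ≤ (n+1)^v₁ := by
    refine le_trans (trace_card_le R₁ v₁ hdim₁ A₁ 𝒜₁ ?_) ?_
    · intro s hs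
      rw [h𝒜₁def, Finset.mem_filter, Finset.mem_powerset] at hs
      exact hs
    · exact Nat.pow_le_pow_left (by omega) v₁
  have hS₂ : 𝒜₂.card ≤ (n+1)^v₂ := by
    refine le_trans (trace_card_le R₂ v₂ hdim₂ A₂ 𝒜₂ ?_) ?_
    · intro s hs
      rw [h𝒜₂def, Finset.mem_filter, Finset.mem_powerset] at hs
      exact hs
    · exact Nat.pow_le_pow_left (by omega) v₂
  have hfinal : 2^n ≤ 6*(n+1)^v := by
    calc 2^n ≤ 𝒜₁.card * (𝒜₂.card * 6) := hcount
      _ ≤ (n+1)^v₁ * ((n+1)^v₂ * 6) := by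
          exact Nat.mul_le_mul hS₁ (Nat.mul_le_mul_right 6 hS₂)
      _ = 6*(n+1)^v := by rw [hv, pow_add]; ring
  have h4 : 4 ≤ v := by omega
  have hx : 3 * (v : ℝ) * Real.logb 2 v < n := by
    rw [hv]; push_cast at hcon ⊢; exact hcon
  have h1 := analytic v n h4 hx
  have h2 : ((2:ℝ))^n ≤ 6*((n : ℝ)+1)^v := by exact_mod_cast hfinal
  linarith
end

section
/- Let (X₁, R₁) and (X₂, R₂) be range spaces, let α be a linearly ordered set, f₁ : X₁ → α, f₂ : X₂ → α, and let J be the family of all sets J^{op}_{r₁,r₂} = {(t₁,t₂) ∈ X₁ × X₂ : t₁ ∈ r₁, t₂ ∈ r₂, f₁(t₁) op f₂(t₂)} for r₁ ∈ R₁, r₂ ∈ R₂ and op ∈ {<, >, ≤, ≥, =, ≠}. Let A be a finite subset of X₁ × X₂ and let A₁ = {x ∈ X₁ : (x,y) ∈ A for some y} and A₂ = {y ∈ X₂ : (x,y) ∈ A for some x}. Then |P_J(A)| ≤ 6 · |P_{R₁}(A₁)| · |P_{R₂}(A₂)|, where P_R(A) = {r ∩ A : r ∈ R} denotes the projection of a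 range family R onto A. -/
/-- The projection of the range family `R` on the set `A`: `{r ∩ A : r ∈ R}`. -/
def proj {X : Type*} (R : Set (Set X)) (A : Set X) : Set (Set X) :=
  (fun r => r ∩ A) '' R

lemma ncard_prod_aux {A B : Type*} (s : Set A) (t : Set B) :
    (s ×ˢ t).ncard = s.ncard * t.ncard := by
  rw [← Nat.card_coe_set_eq, ← Nat.card_coe_set_eq, ← Nat.card_coe_set_eq,
    Nat.card_congr (Equiv.Set.prod s t), Nat.card_prod]

lemma sixRels_finite (α : Type*) [LinearOrder α] : (sixRels α).Finite := by
  unfold sixRels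
  exact Set.Finite.insert _ (Set.Finite.insert _ (Set.Finite.insert _
    (Set.Finite.insert _ (Set.Finite.insert _ (Set.finite_singleton _)))))

lemma sixRels_ncard_le (α : Type*) [LinearOrder α] : (sixRels α).ncard ≤ 6 := by
  unfold sixRels
  refine (Set.ncard_insert_le _ _).trans (Nat.add_le_add_right ?_ 1)
  refine (Set.ncard_insert_le _ _).trans (Nat.add_le_add_right ?_ 1)
  refine (Set.ncard_insert_le _ _).trans (Nat.add_le_add_right ?_ 1)
  refine (Set.ncard_insert_le _ _).trans (Nat.add_le_add_right ?_ 1)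
  refine (Set.ncard_insert_le _ _).trans (Nat.add_le_add_right ?_ 1)
  simp

/-- For a finite set `A` of pairs with cross-sections `A₁` and `A₂`, the projection of
the join ranges on `A` has size at most `6 |P_{R₁}(A₁)| · |P_{R₂}(A₂)|`. -/
theorem proj_joinRanges_card_le {X₁ X₂ α : Type*} [LinearOrder α]
    (R₁ : Set (Set X₁)) (R₂ : Set (Set X₂)) (f₁ : X₁ → α) (f₂ : X₂ → α)
    (A : Finset (X₁ × X₂)) :
    (proj (joinRanges R₁ R₂ f₁ f₂) (A : Set (X₁ × X₂))).ncard ≤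
      6 * (proj R₁ (Prod.fst '' (A : Set (X₁ × X₂)))).ncard *
        (proj R₂ (Prod.snd '' (A : Set (X₁ × X₂)))).ncard := by
  classical
  set A₁ : Set X₁ := Prod.fst '' (A : Set (X₁ × X₂)) with hA₁def
  set A₂ : Set X₂ := Prod.snd '' (A : Set (X₁ × X₂)) with hA₂def
  have hA₁ : A₁.Finite := A.finite_toSet.image _
  have hA₂ : A₂.Finite := A.finite_toSet.image _
  have hP₁ : (proj R₁ A₁).Finite := by
    refine hA₁.finite_subsets.subset ?_
    rintro _ ⟨r, -, rfl⟩
    exact Set.inter_subset_right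
  have hP₂ : (proj R₂ A₂).Finite := by
    refine hA₂.finite_subsets.subset ?_
    rintro _ ⟨r, -, rfl⟩
    exact Set.inter_subset_right
  set F : ((α → α → Prop) × Set X₁ × Set X₂) → Set (X₁ × X₂) :=
    fun q => {p : X₁ × X₂ | p ∈ (A : Set (X₁ × X₂)) ∧ p.1 ∈ q.2.1 ∧ p.2 ∈ q.2.2 ∧
      q.1 (f₁ p.1) (f₂ p.2)} with hF
  have hsub : proj (joinRanges R₁ R₂ f₁ f₂) (A : Set (X₁ × X₂)) ⊆
      F '' ((sixRels α) ×ˢ ((proj R₁ A₁) ×ˢ (proj R₂ A₂))) := by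
    rintro _ ⟨s, ⟨r₁, hr₁, r₂, hr₂, op, hop, rfl⟩, rfl⟩
    refine ⟨(op, r₁ ∩ A₁, r₂ ∩ A₂), ⟨hop, ⟨r₁, hr₁, rfl⟩, ⟨r₂, hr₂, rfl⟩⟩, ?_⟩
    ext p
    simp only [hF, Set.mem_inter_iff, Set.mem_setOf_eq]
    constructor
    · intro h
      exact ⟨⟨h.2.1.1, h.2.2.1.1, h.2.2.2⟩, h.1⟩
    · intro h
      exact ⟨h.2, ⟨h.1.1, ⟨p, h.2, rfl⟩⟩, ⟨h.1.2.1, ⟨p, h.2, rfl⟩⟩, h.1.2.2⟩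
  have hSfin : ((sixRels α) ×ˢ ((proj R₁ A₁) ×ˢ (proj R₂ A₂))).Finite :=
    (sixRels_finite α).prod (hP₁.prod hP₂)
  calc (proj (joinRanges R₁ R₂ f₁ f₂) (A : Set (X₁ × X₂))).ncard
      ≤ (F '' ((sixRels α) ×ˢ ((proj R₁ A₁) ×ˢ (proj R₂ A₂)))).ncard :=
        Set.ncard_le_ncard hsub (hSfin.image F)
    _ ≤ ((sixRels α) ×ˢ ((proj R₁ A₁) ×ˢ (proj R₂ A₂))).ncard :=
        Set.ncard_image_le hSfin
    _ = (sixRels α).ncard * ((proj R₁ A₁).ncard * (proj R₂ A₂).ncard) := by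
        rw [ncard_prod_aux, ncard_prod_aux]
    _ ≤ 6 * ((proj R₁ A₁).ncard * (proj R₂ A₂).ncard) := by
        gcongr; exact sixRels_ncard_le α
    _ = 6 * (proj R₁ A₁).ncard * (proj R₂ A₂).ncard := by ring
end

section
/- Fix natural numbers u ≥ 3 and m ≥ 1 and a linearly ordered set α. For i = 1,…,u let X_i be a set equipped with m column maps col_{i,1}, …, col_{i,m} : X_i → α, and let (X_i, R_i) be a range space of VC-dimension at most v_i with v_i ≥ 2, and assume m ≤ Σ_i v_i. A join condition is a triple consisting of two distinct (table, column) index pairs (i,j), (i',j') and an operator op ∈ {<, >, ≤, ≥, =, ≠}, and is satisfied by (t₁,…,t_u) ∈ X₁ × ⋯ × X_u when col_{i,j}(t_i) op col_{i',j'}(t_{i'}) holds. For ρ = (r₁,…,r_u) with r_i ∈ R_i and ω a sequence of u−1 join conditions, define J^{ω}_{ρ} = {(t₁,…,t_u) : t_i ∈ r_i for all i, and all u−1 join conditions of ω are satisfied}, and let R_Q be the family of all such sets J^{ω}_{ρ}. Then the VC-dimension of the range space (X₁ × ⋯ × X_u, R_Q) is at most 4·u·(Σ_i v_i)·log₂(u·Σ_i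 v_i); that is, every finite subset of X₁ × ⋯ × X_u shattered by R_Q has cardinality at most 4·u·(Σ_i v_i)·log₂(u·Σ_i v_i). -/
/-- A join condition: two (table, column) index pairs and a binary relation on `α`. -/
abbrev JoinCond (u m : ℕ) (α : Type*) : Type _ :=
  (Fin u × Fin m) × (Fin u × Fin m) × (α → α → Prop)

/-- A join condition is valid if its two (table, column) pairs are distinct and its
relation is one of the six comparison operators. -/
def JoinCond.Valid {u m : ℕ} {α : Type*} [LinearOrder α] (c : JoinCond u m α) : Prop :=
  c.1 ≠ c.2.1 ∧ c.2.2 ∈ sixRels α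

/-- A tuple `t` satisfies the join condition `c` if the designated column values are
related by the designated operator. -/
def JoinCond.Holds {u m : ℕ} {α : Type*} {X : Fin u → Type*}
    (col : ∀ i, Fin m → X i → α) (c : JoinCond u m α) (t : ∀ i, X i) : Prop :=
  c.2.2 (col c.1.1 c.1.2 (t c.1.1)) (col c.2.1.1 c.2.1.2 (t c.2.1.1))

/-- The family of outputs of queries combining one select `r i ∈ R i` on each table
with a sequence `ω` of `u - 1` join conditions. -/
def multiJoinRanges {u m : ℕ} {α : Type*} [LinearOrder α] (X : Fin u → Type*)
    (col : ∀ i, Fin m → X i → α) (R : ∀ i, Set (Set (X i))) : Set (Set (∀ i, X i)) :=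
  {s | ∃ r : ∀ i, Set (X i), (∀ i, r i ∈ R i) ∧
    ∃ ω : Fin (u - 1) → JoinCond u m α, (∀ k, (ω k).Valid) ∧
      s = {t | (∀ i, t i ∈ r i) ∧ ∀ k, (ω k).Holds col t}}


open Finset in
lemma sum_choose_le_pow_s10 (n : ℕ) : ∀ w : ℕ, ∑ k ∈ range (w+1), n.choose k ≤ (n+1)^w := by
  intro w
  induction w with
  | zero => simp
  | succ w ih =>
    rw [Finset.sum_range_succ]
    have h1 : n.choose (w+1) ≤ n^(w+1) := Nat.choose_le_pow n (w+1)
    have h2 : n^(w+1) ≤ n * (n+1)^w := by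
      rw [pow_succ']
      exact Nat.mul_le_mul_left n (Nat.pow_le_pow_left (Nat.le_succ n) w)
    calc ∑ k ∈ range (w+1), n.choose k + n.choose (w+1)
        ≤ (n+1)^w + n * (n+1)^w := by omega
      _ = (n+1)^(w+1) := by ring

open Finset in
lemma card_small_powerset {β : Type*} [DecidableEq β] (s : Finset β) (w : ℕ) :
    ((s.powerset).filter (fun t => t.card ≤ w)).card ≤ (s.card + 1)^w := by
  have hsub : (s.powerset).filter (fun t => t.card ≤ w) ⊆
      (range (w+1)).biUnion (fun k => s.powersetCard k) := by
    intro t ht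
    rw [mem_filter, mem_powerset] at ht
    rw [mem_biUnion]
    exact ⟨t.card, by simp [Nat.lt_succ_of_le ht.2], by simp [mem_powersetCard, ht.1]⟩
  calc ((s.powerset).filter (fun t => t.card ≤ w)).card
      ≤ ((range (w+1)).biUnion (fun k => s.powersetCard k)).card := card_le_card hsub
    _ ≤ ∑ k ∈ range (w+1), (s.powersetCard k).card := card_biUnion_le
    _ = ∑ k ∈ range (w+1), s.card.choose k := by simp [card_powersetCard]
    _ ≤ (s.card + 1)^w := sum_choose_le_pow_s10 s.card w

lemma log_le_aux {x a : ℝ} (hx : 0 < x) (ha : 0 < a) :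
    Real.log x ≤ x / a + Real.log a - 1 := by
  have h := Real.log_le_sub_one_of_pos (show (0:ℝ) < x/a by positivity)
  rw [Real.log_div hx.ne' ha.ne'] at h
  linarith

open Finset in
open scoped Classical in
lemma trace_card_le_s10 {β : Type*} [DecidableEq β] (Rf : Set (Set β)) (w : ℕ)
    (hdim : ∀ s : Finset β, Shatters Rf (s : Set β) → s.card ≤ w) (As : Finset β) :
    ((As.powerset).filter (fun s => ∃ rr ∈ Rf, s = As.filter (· ∈ rr))).card
      ≤ (As.card + 1)^w := by
  set T : Finset (Finset β) :=
    (As.powerset).filter (fun s => ∃ rr ∈ Rf, s = As.filter (· ∈ rr)) with hT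
  have hsub : T.shatterer ⊆ (As.powerset).filter (fun s => s.card ≤ w) := by
    intro s hs
    have hshat : T.Shatters s := Finset.mem_shatterer.1 hs
    have hsA : s ⊆ As := by
      obtain ⟨t, htT, hst⟩ := hshat (Finset.Subset.refl s)
      have h1 : s ⊆ t := Finset.inter_eq_left.mp hst
      have h2 : t ⊆ As := by
        rw [hT, mem_filter, mem_powerset] at htT
        exact htT.1
      exact h1.trans h2
    have hcard : s.card ≤ w := by
      refine hdim s ?_
      intro Bs hBs
      obtain ⟨t, htT, hst⟩ := hshat (Finset.filter_subset (fun x => x ∈ Bs) s)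
      rw [hT, mem_filter] at htT
      obtain ⟨-, rr, hrr, rfl⟩ := htT
      refine ⟨rr, hrr, ?_⟩
      ext x
      constructor
      · intro hx
        have hxs : x ∈ s := hx.1
        have hxA : x ∈ As := hsA hxs
        have : x ∈ s ∩ As.filter (· ∈ rr) := by
          simp only [Finset.mem_inter, Finset.mem_filter]
          exact ⟨hxs, hxA, hx.2⟩
        rw [hst] at this
        simpa using (Finset.mem_filter.mp this).2
      · intro hx
        have hxs : x ∈ Bs := hx
        have hxs' : x ∈ (s : Set β) := hBs hx
        have hxfin : x ∈ s.filter (fun y => y ∈ Bs) := by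
          simp only [Finset.mem_filter]
          exact ⟨by exact_mod_cast hxs', hxs⟩
        rw [← hst] at hxfin
        have := Finset.mem_inter.mp hxfin
        have hxrr : x ∈ rr := (Finset.mem_filter.mp this.2).2
        exact ⟨by exact_mod_cast hxs', hxrr⟩
    exact mem_filter.2 ⟨mem_powerset.2 hsA, hcard⟩
  calc T.card ≤ T.shatterer.card := Finset.card_le_card_shatterer T
    _ ≤ ((As.powerset).filter (fun s => s.card ≤ w)).card := card_le_card hsub
    _ ≤ (As.card + 1)^w := card_small_powerset As w

set_option maxHeartbeats 1000000 in
/-- If each range space `(X i, R i)` has VC-dimension at most `v i ≥ 2`, with `u ≥ 3`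
tables of at most `m` columns each and `m ≤ ∑ i, v i`, then the range space of queries
combining a select on each table with `u - 1` join conditions has VC-dimension at most
`4 u (∑ i, v i) log₂(u ∑ i, v i)`. -/
theorem vcdim_multiJoinRanges {u m : ℕ} (hu : 3 ≤ u) (hm : 1 ≤ m)
    {α : Type*} [LinearOrder α] (X : Fin u → Type*) (col : ∀ i, Fin m → X i → α)
    (R : ∀ i, Set (Set (X i))) (v : Fin u → ℕ) (hv : ∀ i, 2 ≤ v i)
    (hdim : ∀ i, ∀ A : Finset (X i), Shatters (R i) (A : Set (X i)) → A.card ≤ v i)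
    (hmv : m ≤ ∑ i, v i) :
    ∀ A : Finset (∀ i, X i), Shatters (multiJoinRanges X col R) (A : Set (∀ i, X i)) →
      (A.card : ℝ) ≤ 4 * u * (∑ i, v i) * Real.logb 2 (u * ∑ i, v i) := by
  classical
  intro A hA
  set V := ∑ i, v i with hVdef
  have hVu : 2 * u ≤ V := by
    have h1 : ∑ _i : Fin u, 2 ≤ ∑ i, v i := Finset.sum_le_sum (fun i _ => hv i)
    simpa [Finset.sum_const, Finset.card_univ, mul_comm] using h1
  set n := A.card with hn
  set Ai : ∀ i, Finset (X i) := fun i => A.image (fun t => t i) with hAidef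
  set T : ∀ i, Finset (Finset (X i)) :=
    fun i => ((Ai i).powerset).filter (fun s => ∃ rr ∈ R i, s = (Ai i).filter (· ∈ rr))
    with hTdef
  set six : Finset (α → α → Prop) :=
    {fun a b => a < b, fun a b => b < a, fun a b => a ≤ b,
     fun a b => b ≤ a, fun a b => a = b, fun a b => a ≠ b} with hsixdef
  set C : Finset (JoinCond u m α) := Finset.univ ×ˢ Finset.univ ×ˢ six with hCdef
  -- extract select ranges and join conditions for each subset of `A`
  have key : ∀ B : Finset (∀ i, X i), ∃ (r : ∀ i, Set (X i))
      (ω : Fin (u-1) → JoinCond u m α), B ⊆ A → ((∀ i, r i ∈ R i) ∧ (∀ k, (ω k).Valid) ∧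
        (A : Set (∀ i, X i)) ∩ {t | (∀ i, t i ∈ r i) ∧ ∀ k, (ω k).Holds col t}
          = (B : Set (∀ i, X i))) := by
    intro B
    by_cases hB : B ⊆ A
    · obtain ⟨rr, hrrQ, hAB⟩ := hA (B : Set (∀ i, X i)) (Finset.coe_subset.mpr hB)
      obtain ⟨r, hr, ω, hω, rfl⟩ := hrrQ
      exact ⟨r, ω, fun _ => ⟨hr, hω, hAB⟩⟩
    · exact ⟨fun _ => ∅, fun _ => ((⟨0, by omega⟩, ⟨0, by omega⟩),
        (⟨0, by omega⟩, ⟨0, by omega⟩), fun _ _ => True), fun h => absurd h hB⟩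
  choose r ω hkey using key
  set f : Finset (∀ i, X i) → (∀ i, Finset (X i)) × (Fin (u-1) → JoinCond u m α) :=
    fun B => (fun i => (Ai i).filter (fun x => x ∈ r B i), ω B) with hfdef
  have hmaps : ∀ B ∈ A.powerset,
      f B ∈ (Fintype.piFinset T) ×ˢ (Fintype.piFinset fun _ : Fin (u-1) => C) := by
    intro B hB
    rw [Finset.mem_powerset] at hB
    obtain ⟨hr, hω, -⟩ := hkey B hB
    rw [Finset.mem_product]
    constructor
    · rw [Fintype.mem_piFinset]
      intro i
      exact Finset.mem_filter.2 ⟨Finset.mem_powerset.2 (Finset.filter_subset _ _),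
        r B i, hr i, rfl⟩
    · rw [Fintype.mem_piFinset]
      intro k
      rw [hCdef, Finset.mem_product, Finset.mem_product]
      refine ⟨Finset.mem_univ _, Finset.mem_univ _, ?_⟩
      have h2 := (hω k).2
      simp only [sixRels, Set.mem_insert_iff, Set.mem_singleton_iff] at h2
      simp only [hsixdef, Finset.mem_insert, Finset.mem_singleton]
      tauto
  have hinj : Set.InjOn f ↑A.powerset := by
    intro B₁ hB₁ B₂ hB₂ hfeq
    rw [Finset.mem_coe, Finset.mem_powerset] at hB₁ hB₂
    obtain ⟨hr₁, hω₁, hset₁⟩ := hkey B₁ hB₁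
    obtain ⟨hr₂, hω₂, hset₂⟩ := hkey B₂ hB₂
    have h1 : ∀ i, (Ai i).filter (fun x => x ∈ r B₁ i)
        = (Ai i).filter (fun x => x ∈ r B₂ i) := fun i =>
      congrFun (congrArg Prod.fst hfeq) i
    have h2 : ω B₁ = ω B₂ := congrArg Prod.snd hfeq
    have hcol : ∀ t, t ∈ A → ∀ i, (t i ∈ r B₁ i ↔ t i ∈ r B₂ i) := by
      intro t ht i
      have hAiI : t i ∈ Ai i := Finset.mem_image_of_mem _ ht
      constructor
      · intro h
        have hx : t i ∈ (Ai i).filter (fun x => x ∈ r B₁ i) :=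
          Finset.mem_filter.2 ⟨hAiI, h⟩
        rw [h1 i] at hx
        exact (Finset.mem_filter.mp hx).2
      · intro h
        have hx : t i ∈ (Ai i).filter (fun x => x ∈ r B₂ i) :=
          Finset.mem_filter.2 ⟨hAiI, h⟩
        rw [← h1 i] at hx
        exact (Finset.mem_filter.mp hx).2
    have hSeq : (A : Set (∀ i, X i)) ∩ {t | (∀ i, t i ∈ r B₁ i) ∧ ∀ k, (ω B₁ k).Holds col t}
        = (A : Set (∀ i, X i)) ∩ {t | (∀ i, t i ∈ r B₂ i) ∧ ∀ k, (ω B₂ k).Holds col t} := by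
      ext t
      simp only [Set.mem_inter_iff, Set.mem_setOf_eq, Finset.mem_coe]
      constructor
      · rintro ⟨ht, hri, hh⟩
        exact ⟨ht, fun i => (hcol t ht i).1 (hri i), by rw [← h2]; exact hh⟩
      · rintro ⟨ht, hri, hh⟩
        exact ⟨ht, fun i => (hcol t ht i).2 (hri i), by rw [h2]; exact hh⟩
    have : (B₁ : Set (∀ i, X i)) = (B₂ : Set (∀ i, X i)) := by
      rw [← hset₁, ← hset₂, hSeq]
    exact Finset.coe_injective this
  have hcard1 : A.powerset.card
      ≤ ((Fintype.piFinset T) ×ˢ (Fintype.piFinset fun _ : Fin (u-1) => C)).card :=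
    Finset.card_le_card_of_injOn f hmaps hinj
  have hsix6 : six.card ≤ 6 := by
    rw [hsixdef]
    refine (Finset.card_insert_le _ _).trans (Nat.succ_le_succ ?_)
    refine (Finset.card_insert_le _ _).trans (Nat.succ_le_succ ?_)
    refine (Finset.card_insert_le _ _).trans (Nat.succ_le_succ ?_)
    refine (Finset.card_insert_le _ _).trans (Nat.succ_le_succ ?_)
    refine (Finset.card_insert_le _ _).trans (Nat.succ_le_succ ?_)
    simp
  have hC : C.card ≤ u * m * (u * m * 6) := by
    rw [hCdef, Finset.card_product, Finset.card_product]
    have huniv : (Finset.univ : Finset (Fin u × Fin m)).card = u * m := by simp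
    rw [huniv]
    exact Nat.mul_le_mul_left _ (Nat.mul_le_mul_left _ hsix6)
  have hTi : ∀ i, (T i).card ≤ (n+1)^(v i) := by
    intro i
    have h1 := trace_card_le_s10 (R i) (v i) (hdim i) (Ai i)
    have h2 : (Ai i).card + 1 ≤ n + 1 := Nat.succ_le_succ (Finset.card_image_le)
    calc (T i).card ≤ ((Ai i).card + 1)^(v i) := by
          rw [hTdef]; convert h1 using 3
      _ ≤ (n+1)^(v i) := Nat.pow_le_pow_left h2 _
  have hmain : 2^n ≤ (n+1)^V * (u * m * (u * m * 6))^(u-1) := by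
    calc 2^n = A.powerset.card := (Finset.card_powerset A).symm
      _ ≤ ((Fintype.piFinset T) ×ˢ (Fintype.piFinset fun _ : Fin (u-1) => C)).card := hcard1
      _ = (∏ i, (T i).card) * (∏ _k : Fin (u-1), C.card) := by
          rw [Finset.card_product, Fintype.card_piFinset, Fintype.card_piFinset]
      _ ≤ (∏ i, (n+1)^(v i)) * (∏ _k : Fin (u-1), (u * m * (u * m * 6))) := by
          refine Nat.mul_le_mul (Finset.prod_le_prod' fun i _ => hTi i)
            (Finset.prod_le_prod' fun k _ => hC)
      _ = (n+1)^V * (u * m * (u * m * 6))^(u-1) := by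
          rw [Finset.prod_pow_eq_pow_sum, Finset.prod_const, Finset.card_univ,
            Fintype.card_fin]
  -- Part 2: real/logarithm arithmetic
  have hV6 : 6 ≤ V := by omega
  have hmV : m ≤ V := hmv
  have hN18 : 18 ≤ u * V := by nlinarith
  have hmain2 : 2^n ≤ (n+1)^V * (u*V)^(3*u) := by
    have hbase : u * m * (u * m * 6) ≤ (u*V) * ((u*V) * (u*V)) := by
      have h1 : u * m ≤ u * V := Nat.mul_le_mul_left u hmV
      have h2 : u * m * 6 ≤ u * V * (u*V) := by nlinarith
      exact Nat.mul_le_mul h1 h2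
    have hpow : (u * m * (u * m * 6))^(u-1) ≤ (u*V)^(3*u) := by
      have e : (u*V) * ((u*V) * (u*V)) = (u*V)^3 := by ring
      calc (u * m * (u * m * 6))^(u-1) ≤ ((u*V) * ((u*V) * (u*V)))^(u-1) :=
            Nat.pow_le_pow_left hbase _
        _ = (u*V)^(3*(u-1)) := by rw [e, ← pow_mul]
        _ ≤ (u*V)^(3*u) := Nat.pow_le_pow_right (by positivity) (by omega)
    exact hmain.trans (Nat.mul_le_mul_left _ hpow)
  clear_value n V
  clear * - hu hm hmv hV6 hmV hN18 hmain2
  have hmainR : (2:ℝ)^n ≤ ((n:ℝ)+1)^V * ((u:ℝ)*(V:ℝ))^(3*u) := by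
    exact_mod_cast hmain2
  have hG0 : (0:ℝ) < Real.log 2 := Real.log_pos one_lt_two
  have hGd : 0.6931471803 < Real.log 2 := Real.log_two_gt_d9
  have huR : (3:ℝ) ≤ (u:ℝ) := by exact_mod_cast hu
  have hVR : (6:ℝ) ≤ (V:ℝ) := by exact_mod_cast hV6
  have hnR : (0:ℝ) ≤ (n:ℝ) := Nat.cast_nonneg n
  have hNR : (18:ℝ) ≤ (u:ℝ) * (V:ℝ) := by exact_mod_cast hN18
  have hGi : (Real.log 2)⁻¹ ≤ 1.45 := by
    have h1 : Real.log 2 * (Real.log 2)⁻¹ = 1 := mul_inv_cancel₀ hG0.ne'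
    nlinarith
  have hGi0 : (0:ℝ) ≤ (Real.log 2)⁻¹ := by positivity
  -- main log inequality, in base-2 logs
  have hlb := Real.logb_le_logb_of_le one_lt_two (by positivity) hmainR
  rw [Real.logb_pow, Real.logb_mul (by positivity) (by positivity), Real.logb_pow,
    Real.logb_pow, Real.logb_self_eq_one one_lt_two] at hlb
  push_cast at hlb
  -- bound logb 2 (n+1)
  have hX : Real.logb 2 ((n:ℝ)+1)
      ≤ ((n:ℝ)+1)/(6*(V:ℝ)) * (Real.log 2)⁻¹ + 2 * Real.logb 2 ((u:ℝ)*(V:ℝ)) := by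
    have h : Real.log ((n:ℝ)+1) ≤ ((n:ℝ)+1)/(6*(V:ℝ)) + Real.log (6*(V:ℝ)) - 1 :=
      log_le_aux (by positivity) (by positivity)
    have h2 : Real.log (6*(V:ℝ)) ≤ 2 * Real.log ((u:ℝ)*(V:ℝ)) := by
      have ha : (6*(V:ℝ)) ≤ ((u:ℝ)*(V:ℝ))^2 := by nlinarith
      have hb := Real.log_le_log (by positivity) ha
      rw [Real.log_pow] at hb
      push_cast at hb
      linarith
    rw [Real.logb, Real.logb, div_eq_mul_inv, div_eq_mul_inv]
    have h3 := mul_le_mul_of_nonneg_right h hGi0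
    have h4 := mul_le_mul_of_nonneg_right h2 hGi0
    ring_nf at h3 h4 ⊢
    linarith
  have hVX : (V:ℝ) * Real.logb 2 ((n:ℝ)+1)
      ≤ ((n:ℝ)+1)/4 + 2*(V:ℝ)*Real.logb 2 ((u:ℝ)*(V:ℝ)) := by
    have h := mul_le_mul_of_nonneg_left hX (show (0:ℝ) ≤ (V:ℝ) by linarith)
    have e : (V:ℝ) * (((n:ℝ)+1)/(6*(V:ℝ)) * (Real.log 2)⁻¹)
        = ((n:ℝ)+1)/6 * (Real.log 2)⁻¹ := by
      have hVne : (V:ℝ) ≠ 0 := by linarith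
      field_simp
    have h5 := mul_le_mul_of_nonneg_left hGi (show (0:ℝ) ≤ ((n:ℝ)+1)/6 by positivity)
    ring_nf at h e h5 ⊢
    linarith
  have hLB4 : (4:ℝ) ≤ Real.logb 2 ((u:ℝ)*(V:ℝ)) := by
    have h1 : (2:ℝ)^(4:ℕ) ≤ (u:ℝ)*(V:ℝ) := by norm_num; linarith
    have h2 := Real.logb_le_logb_of_le one_lt_two (by positivity) h1
    rw [Real.logb_pow, Real.logb_self_eq_one one_lt_two] at h2
    push_cast at h2
    linarith
  have hLB0 : (0:ℝ) ≤ Real.logb 2 ((u:ℝ)*(V:ℝ)) := by linarith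
  have hq2 : 2*(V:ℝ)*Real.logb 2 ((u:ℝ)*(V:ℝ))
      ≤ (2/3)*((u:ℝ)*(V:ℝ)*Real.logb 2 ((u:ℝ)*(V:ℝ))) := by
    nlinarith [mul_le_mul_of_nonneg_right huR
      (mul_nonneg (show (0:ℝ) ≤ (V:ℝ) by linarith) hLB0)]
  have hq3 : 3*(u:ℝ)*Real.logb 2 ((u:ℝ)*(V:ℝ))
      ≤ (u:ℝ)*(V:ℝ)*Real.logb 2 ((u:ℝ)*(V:ℝ)) := by
    nlinarith [mul_le_mul_of_nonneg_right hVR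
      (mul_nonneg (show (0:ℝ) ≤ (u:ℝ) by linarith) hLB0)]
  have hq4 : (72:ℝ) ≤ (u:ℝ)*(V:ℝ)*Real.logb 2 ((u:ℝ)*(V:ℝ)) := by
    nlinarith [mul_le_mul hNR hLB4 (by norm_num : (0:ℝ) ≤ 4)
      (by linarith : (0:ℝ) ≤ (u:ℝ)*(V:ℝ))]
  linarith [hlb, hVX, hq2, hq3, hq4]
end

section
/- Let u, m, V, v be natural numbers with u ≥ 3, m ≥ 1, m ≤ V, and v > 4·u·V·log₂(u·V) (as real numbers). Then (m·u)^{2u} · v^{V} < 2^v. -/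
/-! Take `log₂` of both sides and give each factor half of `v`. With `L = log₂(u·V) ≥ 1` we have
`v > 4·u·V·L`. Since `m·u ≤ u·V`, the first factor contributes `2u·log₂(m·u) ≤ 2·u·V·L < v/2`.
For the second, `v ≥ 6·V·log₂(2V)`; writing `v = 2V·t` this says `log₂(2V) ≤ t/3`, and
`log₂ t ≤ 2t/3` (from `log t ≤ t/e`), so `V·log₂ v = V·(log₂(2V) + log₂ t) ≤ V·t = v/2`. -/

open Real

lemma Real.logb_two_le_two_thirds_mul {t : ℝ} (ht : 0 < t) : logb 2 t ≤ 2 / 3 * t := by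
  have hlog : exp 1 * log t ≤ t := by simpa [exp_log ht] using exp_one_mul_le_exp (x := log t)
  have he := exp_one_gt_d9
  have hl2 := log_two_gt_d9
  rw [logb, div_le_iff₀ (log_pos one_lt_two)]
  nlinarith [mul_pos ht (sub_pos.mpr he), mul_pos ht (sub_pos.mpr hl2)]

lemma Real.mul_logb_two_le_half {V v : ℝ} (hV : 1 ≤ V) (hv : 6 * V * logb 2 (2 * V) ≤ v) :
    V * logb 2 v ≤ v / 2 := by
  have hlog2V : 1 ≤ logb 2 (2 * V) := by
    rw [le_logb_iff_rpow_le one_lt_two (by linarith)]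
    norm_num
    linarith
  set t := v / (2 * V) with ht
  have hv_eq : v = 2 * V * t := by rw [ht]; field_simp
  have htpos : 0 < t := by rw [ht]; apply div_pos <;> nlinarith
  have hlog2V_le : 3 * logb 2 (2 * V) ≤ t := by
    refine le_of_mul_le_mul_left ?_ (by positivity : 0 < 2 * V)
    linarith
  have hlogv : logb 2 v = logb 2 (2 * V) + logb 2 t := by
    rw [hv_eq, logb_mul (by positivity) htpos.ne']
  rw [hlogv, hv_eq]
  nlinarith [logb_two_le_two_thirds_mul htpos]

/-- For `u ≥ 3`, `1 ≤ m ≤ V` and `v > 4·u·V·log₂(u·V)` (as reals), one has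
`(m·u)^(2u) · v^V < 2^v`. -/
theorem multijoin_counting_ineq (u m V v : ℕ) (hu : 3 ≤ u) (hm : 1 ≤ m) (hmV : m ≤ V)
    (hv : (4 : ℝ) * u * V * Real.logb 2 (u * V) < v) :
    ((m : ℝ) * u) ^ (2 * u) * (v : ℝ) ^ V < 2 ^ v := by
  have hu' : (3 : ℝ) ≤ u := by exact_mod_cast hu
  have hm' : (1 : ℝ) ≤ m := by exact_mod_cast hm
  have hmV' : (m : ℝ) ≤ V := by exact_mod_cast hmV
  have hV : (1 : ℝ) ≤ V := hm'.trans hmV'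
  have hL : 1 ≤ logb 2 (u * V) := by
    rw [le_logb_iff_rpow_le one_lt_two (by positivity)]
    norm_num
    nlinarith
  have hL₀ : 0 ≤ logb 2 (u * V) := zero_le_one.trans hL
  have hvpos : (0 : ℝ) < v := (mul_pos (by positivity) (by linarith)).trans hv
  have hlog_mu : 2 * u * logb 2 (m * u) < v / 2 := by
    have : logb 2 (m * u) ≤ logb 2 (u * V) :=
      logb_le_logb_of_le one_lt_two (by positivity) (by nlinarith)
    nlinarith [mul_nonneg (mul_nonneg (sub_nonneg.mpr hV) (by positivity : (0 : ℝ) ≤ u)) hL₀]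
  have hlog_v : V * logb 2 v ≤ v / 2 := by
    refine mul_logb_two_le_half hV ?_
    have : logb 2 (2 * V) ≤ logb 2 (u * V) :=
      logb_le_logb_of_le one_lt_two (by positivity) (by nlinarith)
    nlinarith [mul_nonneg (mul_nonneg (sub_nonneg.mpr hu') (by positivity : (0 : ℝ) ≤ V)) hL₀]
  rw [← rpow_natCast 2 v, ← logb_lt_iff_lt_rpow one_lt_two (by positivity),
    logb_mul (by positivity) (by positivity), logb_pow, logb_pow]
  push_cast
  linarith
end
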